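/- arXiv:2605.14176 — 4 statements merged into one kernel-verified Lean document; each statement's English description precedes it below -/
import Mathlib

section
/- For a tree T with no isolated vertices, the permanent of its Laplacian matrix L(T) equals the sum over all matchings M of T of the product, over vertices v not covered by M, of the degree d(v). (The empty matching contributes the product of all degrees.) -/
open Finset SimpleGraph Matrix


/-- The finset of matchings of a graph `G`: sets of pairwise disjoint edges. -/
def matchingsOf {n : ℕ} (G : SimpleGraph (Fin n)) [DecidableRel G.Adj] :
    Finset (Finset (Sym2 (Fin n))) :=
  G.edgeFinset.powerset.filter
    (fun M => ∀ e ∈ M, ∀ f ∈ M, e ≠ f → ∀ v : Fin n, ¬(v ∈ e ∧ v ∈ f))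

section Aux

variable {n : ℕ}

lemma lap_diag (T : SimpleGraph (Fin n)) [DecidableRel T.Adj] (v : Fin n) :
    T.lapMatrix ℚ v v = (T.degree v : ℚ) := by
  simp [lapMatrix, degMatrix, adjMatrix]

lemma lap_adj (T : SimpleGraph (Fin n)) [DecidableRel T.Adj] {u v : Fin n} (h : T.Adj u v) :
    T.lapMatrix ℚ u v = -1 := by
  simp [lapMatrix, degMatrix, adjMatrix, h, h.ne]

lemma lap_nadj (T : SimpleGraph (Fin n)) [DecidableRel T.Adj] {u v : Fin n}
    (hne : u ≠ v) (h : ¬ T.Adj u v) : T.lapMatrix ℚ u v = 0 := by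
  simp [lapMatrix, degMatrix, adjMatrix, h, hne]

lemma exists_orbit_walk {V : Type*} {G : SimpleGraph V} (f : V → V) (x : V)
    (j : ℕ) (h : ∀ m < j, G.Adj (f^[m+1] x) (f^[m] x)) :
    ∃ w : G.Walk (f^[j] x) x, w.length = j ∧
      w.support = ((List.range (j+1)).map (fun m => f^[m] x)).reverse := by
  induction j with
  | zero => exact ⟨Walk.nil, by simp⟩
  | succ j ih =>
    obtain ⟨w, hl, hs⟩ := ih (fun m hm => h m (by omega))
    refine ⟨Walk.cons (h j (by omega)) w, by rw [Walk.length_cons, hl], ?_⟩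
    rw [Walk.support_cons, hs]
    conv_rhs => rw [List.range_succ]
    rw [List.map_append, List.reverse_append, List.map_singleton, List.reverse_singleton,
      List.singleton_append]

/-- In a tree, a permutation all of whose non-fixed points move to adjacent
vertices is an involution. -/
lemma sigma_sq {n : ℕ} {T : SimpleGraph (Fin n)} (hT : T.IsTree) (σ : Equiv.Perm (Fin n))
    (hσ : ∀ i, σ i ≠ i → T.Adj (σ i) i) : ∀ i, σ (σ i) = i := by
  by_contra hc
  push_neg at hc
  obtain ⟨i, hi2⟩ := hc
  have hi1 : σ i ≠ i := fun h => hi2 (by rw [h, h])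
  have hper : Function.IsPeriodicPt σ (orderOf σ) i := by
    unfold Function.IsPeriodicPt Function.IsFixedPt
    rw [Equiv.Perm.iterate_eq_pow, pow_orderOf_eq_one]; rfl
  have hmem : i ∈ Function.periodicPts ⇑σ := ⟨orderOf σ, orderOf_pos σ, hper⟩
  have hmp := Function.iterate_minimalPeriod (f := ⇑σ) (x := i)
  set k := Function.minimalPeriod σ i with hk
  have hkpos : 0 < k := Function.minimalPeriod_pos_of_mem_periodicPts hmem
  have hk1 : k ≠ 1 := fun h => hi1 (by rw [h] at hmp; simpa using hmp)
  have hk2 : k ≠ 2 := fun h => hi2 (by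
    rw [h] at hmp
    simpa [Function.iterate_succ_apply'] using hmp)
  have hk3 : 3 ≤ k := by omega
  have hnf : ∀ m, σ ((⇑σ)^[m] i) ≠ (⇑σ)^[m] i := by
    intro m h
    apply hi1
    have h2 : (⇑σ)^[m] (σ i) = (⇑σ)^[m] i := by
      rw [← Function.iterate_succ_apply, Function.iterate_succ_apply', h]
    exact σ.injective.iterate m h2
  have hinj := Function.iterate_injOn_Iio_minimalPeriod (f := ⇑σ) (x := i)
  rw [← hk] at hinj
  obtain ⟨w, hwl, hws⟩ := exists_orbit_walk (G := T) (⇑σ) (σ i) (k - 1)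
    (fun m _ => by
      have h1 := hσ _ (hnf (m+1))
      rw [← Function.iterate_succ_apply' (⇑σ) (m+1) i] at h1
      rw [← Function.iterate_succ_apply (⇑σ) m i, ← Function.iterate_succ_apply (⇑σ) (m+1) i]
      exact h1)
  have hend : (⇑σ)^[k-1] (σ i) = i := by
    have h1 : (⇑σ)^[k-1] (σ i) = (⇑σ)^[k] i := by
      rw [← Function.iterate_succ_apply]
      congr 1
      omega
    rw [h1, hmp]
  have hnodup : w.support.Nodup := by
    rw [hws, List.nodup_reverse, List.nodup_map_iff_inj_on List.nodup_range]
    intro a ha b hb hab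
    simp only [List.mem_range] at ha hb
    have ha' : a < k := by omega
    have hb' : b < k := by omega
    rw [← Function.iterate_succ_apply (⇑σ) a i, ← Function.iterate_succ_apply (⇑σ) b i] at hab
    simp only [Nat.succ_eq_add_one] at hab
    by_cases haa : a + 1 = k
    · by_cases hbb : b + 1 = k
      · omega
      · exfalso
        rw [haa, hmp] at hab
        have : Function.IsPeriodicPt σ (b+1) i := hab.symm
        have := this.minimalPeriod_le (by omega)
        omega
    · by_cases hbb : b + 1 = k
      · exfalso
        rw [hbb, hmp] at hab
        have : Function.IsPeriodicPt σ (a+1) i := hab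
        have := this.minimalPeriod_le (by omega)
        omega
      · have := hinj (by simp only [Set.mem_Iio]; omega : a + 1 ∈ Set.Iio k)
          (by simp only [Set.mem_Iio]; omega : b + 1 ∈ Set.Iio k) hab
        omega
  let p1 : T.Walk i (σ i) := w.copy hend rfl
  have hp1 : p1.IsPath := by
    rw [Walk.isPath_def]
    simpa [p1] using hnodup
  let p2 : T.Walk i (σ i) := Walk.cons (hσ i hi1).symm Walk.nil
  have hp2 : p2.IsPath := by
    simp [p2, Walk.isPath_def, hi1.symm, Ne, eq_comm]
  have hpe : p1 = p2 :=
    congrArg Subtype.val (hT.IsAcyclic.path_unique ⟨p1, hp1⟩ ⟨p2, hp2⟩)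
  have hlen : p1.length = p2.length := by rw [hpe]
  simp only [p1, p2, Walk.length_copy, Walk.length_cons, Walk.length_nil, hwl] at hlen
  omega

/-- The partner function of a set of edges. -/
noncomputable def matchFun (M : Finset (Sym2 (Fin n))) (v : Fin n) : Fin n :=
  if h : ∃ e ∈ M, v ∈ e then Sym2.Mem.other' h.choose_spec.2 else v

lemma matchFun_not_mem {M : Finset (Sym2 (Fin n))} {v : Fin n}
    (h : ∀ e ∈ M, v ∉ e) : matchFun M v = v := by
  rw [matchFun, dif_neg]
  rintro ⟨e, he, hv⟩
  exact h e he hv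

lemma matchFun_mem_eq {M : Finset (Sym2 (Fin n))}
    (hd : ∀ e ∈ M, ∀ f ∈ M, e ≠ f → ∀ v : Fin n, ¬(v ∈ e ∧ v ∈ f))
    {e : Sym2 (Fin n)} {v : Fin n} (he : e ∈ M) (hv : v ∈ e) :
    matchFun M v = Sym2.Mem.other' hv := by
  have hex : ∃ e ∈ M, v ∈ e := ⟨e, he, hv⟩
  rw [matchFun, dif_pos hex]
  have hce : hex.choose = e := by
    by_contra hne
    exact hd _ hex.choose_spec.1 _ he hne v ⟨hex.choose_spec.2, hv⟩
  have key : ∀ (z : Sym2 (Fin n)) (hz : z = e) (h1 : v ∈ z),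
      Sym2.Mem.other' h1 = Sym2.Mem.other' hv := by
    rintro z rfl h1; rfl
  exact key _ hce _

lemma matchFun_pair {M : Finset (Sym2 (Fin n))}
    (hd : ∀ e ∈ M, ∀ f ∈ M, e ≠ f → ∀ v : Fin n, ¬(v ∈ e ∧ v ∈ f))
    {a b : Fin n} (he : s(a, b) ∈ M) : matchFun M a = b := by
  have hv : a ∈ s(a, b) := Sym2.mem_mk_left a b
  rw [matchFun_mem_eq hd he hv]
  have := Sym2.other_spec' hv
  rwa [Sym2.congr_right] at this

lemma matchFun_involutive {M : Finset (Sym2 (Fin n))}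
    (hd : ∀ e ∈ M, ∀ f ∈ M, e ≠ f → ∀ v : Fin n, ¬(v ∈ e ∧ v ∈ f)) :
    Function.Involutive (matchFun M) := by
  intro v
  by_cases hex : ∃ e ∈ M, v ∈ e
  · obtain ⟨e, he, hv⟩ := hex
    have hsp : s(v, Sym2.Mem.other' hv) = e := Sym2.other_spec' hv
    have h1 : matchFun M v = Sym2.Mem.other' hv := matchFun_pair hd (by rwa [hsp])
    have h2 : matchFun M (Sym2.Mem.other' hv) = v :=
      matchFun_pair hd (by rwa [Sym2.eq_swap, hsp])
    rw [h1, h2]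
  · push_neg at hex
    rw [matchFun_not_mem hex, matchFun_not_mem hex]

/-- The permutation associated to a matching. -/
noncomputable def matchPerm (M : Finset (Sym2 (Fin n))) : Equiv.Perm (Fin n) :=
  @dite _ (Function.Involutive (matchFun M)) (Classical.dec _)
    (fun h => h.toPerm) (fun _ => 1)

lemma matchPerm_apply {M : Finset (Sym2 (Fin n))} (h : Function.Involutive (matchFun M))
    (v : Fin n) : matchPerm M v = matchFun M v := by
  rw [matchPerm, dif_pos h]; rfl

/-- The matching associated to a permutation. -/
def mOf (σ : Equiv.Perm (Fin n)) : Finset (Sym2 (Fin n)) :=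
  (univ.filter fun v => σ v ≠ v).image (fun v => s(v, σ v))

lemma mem_mOf {σ : Equiv.Perm (Fin n)} {e : Sym2 (Fin n)} :
    e ∈ mOf σ ↔ ∃ v, σ v ≠ v ∧ e = s(v, σ v) := by
  simp [mOf, eq_comm]

lemma not_mem_mOf_of_fixed {σ : Equiv.Perm (Fin n)} (hinv : ∀ i, σ (σ i) = i)
    {v : Fin n} (hv : σ v = v) : ∀ e ∈ mOf σ, v ∉ e := by
  intro e he hve
  obtain ⟨u, hu, rfl⟩ := mem_mOf.1 he
  rcases Sym2.mem_iff.1 hve with rfl | rfl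
  · exact hu hv
  · exact hu (((hinv u).symm.trans hv).symm)

lemma mOf_disjoint {σ : Equiv.Perm (Fin n)} (hinv : ∀ i, σ (σ i) = i) :
    ∀ e ∈ mOf σ, ∀ f ∈ mOf σ, e ≠ f → ∀ v : Fin n, ¬(v ∈ e ∧ v ∈ f) := by
  have key : ∀ (u x : Fin n), σ u ≠ u → x ∈ s(u, σ u) → s(u, σ u) = s(x, σ x) := by
    intro u x hu hx
    rcases Sym2.mem_iff.1 hx with rfl | rfl
    · rfl
    · rw [hinv u, Sym2.eq_swap]
  rintro e he f hf hef v ⟨hve, hvf⟩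
  obtain ⟨u, hu, rfl⟩ := mem_mOf.1 he
  obtain ⟨u', hu', rfl⟩ := mem_mOf.1 hf
  exact hef ((key u v hu hve).trans (key u' v hu' hvf).symm)

end Aux

/-- For a tree `T` with no isolated vertices, the permanent of its Laplacian matrix
equals the sum over all matchings `M` of `T` of the product of the degrees of the
vertices not covered by `M`. -/
theorem permanent_lapMatrix_eq_sum_matchings
    (n : ℕ) (hn : 2 ≤ n) (T : SimpleGraph (Fin n)) [DecidableRel T.Adj]
    (hT : T.IsTree) (hiso : ∀ v, 0 < T.degree v) :
    (T.lapMatrix ℚ).permanent =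
      ∑ M ∈ matchingsOf T,
        ∏ v ∈ Finset.univ.filter (fun v => ∀ e ∈ M, v ∉ e), (T.degree v : ℚ) := by
  have hstep : (T.lapMatrix ℚ).permanent
      = ∑ σ ∈ univ.filter (fun σ : Equiv.Perm (Fin n) => ∀ i, σ i ≠ i → T.Adj (σ i) i),
          ∏ i, T.lapMatrix ℚ (σ i) i := by
    rw [Matrix.permanent]
    rw [Finset.sum_filter_of_ne]
    intro σ _ hσ i hi
    by_contra hadj
    exact hσ (Finset.prod_eq_zero (mem_univ i) (lap_nadj T hi hadj))
  rw [hstep]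
  refine Finset.sum_nbij' mOf matchPerm ?_ ?_ ?_ ?_ ?_
  · -- mOf σ is a matching
    intro σ hσ
    have hP : ∀ i, σ i ≠ i → T.Adj (σ i) i := (mem_filter.1 hσ).2
    have hinv := sigma_sq hT σ hP
    refine mem_filter.2 ⟨mem_powerset.2 ?_, mOf_disjoint hinv⟩
    intro e he
    obtain ⟨v, hv, rfl⟩ := mem_mOf.1 he
    exact mem_edgeFinset.2 ((hP v hv).symm)
  · -- matchPerm M satisfies the adjacency condition
    intro M hM
    have hMd := (mem_filter.1 hM).2
    have hMinv := matchFun_involutive hMd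
    refine mem_filter.2 ⟨mem_univ _, ?_⟩
    intro v hv
    rw [matchPerm_apply hMinv] at hv ⊢
    by_cases hex : ∃ e ∈ M, v ∈ e
    · obtain ⟨e, he, hve⟩ := hex
      have hsp : s(v, Sym2.Mem.other' hve) = e := Sym2.other_spec' hve
      rw [matchFun_mem_eq hMd he hve]
      have hedge : e ∈ T.edgeFinset := mem_powerset.1 (mem_filter.1 hM).1 he
      have : T.Adj v (Sym2.Mem.other' hve) := by
        have := mem_edgeFinset.1 hedge
        rw [← hsp] at this
        exact this
      exact this.symm
    · push_neg at hex
      exact absurd (matchFun_not_mem hex) hv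
  · -- left inverse
    intro σ hσ
    have hP : ∀ i, σ i ≠ i → T.Adj (σ i) i := (mem_filter.1 hσ).2
    have hinv := sigma_sq hT σ hP
    have hfun : matchFun (mOf σ) = ⇑σ := funext fun v => by
      by_cases hv : σ v = v
      · rw [matchFun_not_mem (not_mem_mOf_of_fixed hinv hv), hv]
      · exact matchFun_pair (mOf_disjoint hinv) (mem_mOf.2 ⟨v, hv, rfl⟩)
    have hI : Function.Involutive (matchFun (mOf σ)) := by
      rw [hfun]; exact fun v => hinv v
    exact Equiv.ext fun v => by rw [matchPerm_apply hI, hfun]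
  · -- right inverse
    intro M hM
    have hMd := (mem_filter.1 hM).2
    have hMsub : M ⊆ T.edgeFinset := mem_powerset.1 (mem_filter.1 hM).1
    have hMinv := matchFun_involutive hMd
    refine Finset.Subset.antisymm ?_ ?_
    · intro e he
      obtain ⟨v, hv, rfl⟩ := mem_mOf.1 he
      rw [matchPerm_apply hMinv] at hv ⊢
      have hex : ∃ e ∈ M, v ∈ e := by
        by_contra h
        push_neg at h
        exact hv (matchFun_not_mem h)
      obtain ⟨f, hf, hvf⟩ := hex
      rw [matchFun_mem_eq hMd hf hvf, Sym2.other_spec' hvf]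
      exact hf
    · intro e
      refine Sym2.ind (fun a b he => ?_) e
      have hab : a ≠ b := by
        intro h
        exact T.not_isDiag_of_mem_edgeSet (mem_edgeFinset.1 (hMsub he))
          (h ▸ Sym2.mk_isDiag_iff.2 rfl)
      have hfab : matchFun M a = b := matchFun_pair hMd he
      refine mem_mOf.2 ⟨a, ?_, ?_⟩
      · rw [matchPerm_apply hMinv, hfab]; exact hab.symm
      · rw [matchPerm_apply hMinv, hfab]
  · -- weights agree
    intro σ hσ
    have hP : ∀ i, σ i ≠ i → T.Adj (σ i) i := (mem_filter.1 hσ).2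
    have hinv := sigma_sq hT σ hP
    have hset : (univ.filter (fun v => ∀ e ∈ mOf σ, v ∉ e))
        = univ.filter (fun v => σ v = v) := by
      ext v
      simp only [mem_filter, mem_univ, true_and]
      constructor
      · intro h
        by_contra hv
        exact h _ (mem_mOf.2 ⟨v, hv, rfl⟩) (Sym2.mem_mk_left _ _)
      · intro hv
        exact not_mem_mOf_of_fixed hinv hv
    rw [hset, ← prod_filter_mul_prod_filter_not univ (fun v => σ v = v)
      (fun i => T.lapMatrix ℚ (σ i) i)]
    have h1 : ∏ v ∈ univ.filter (fun v => σ v = v), T.lapMatrix ℚ (σ v) v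
        = ∏ v ∈ univ.filter (fun v => σ v = v), (T.degree v : ℚ) :=
      prod_congr rfl fun v hv => by rw [(mem_filter.1 hv).2]; exact lap_diag T v
    have h2 : ∏ v ∈ univ.filter (fun v => ¬σ v = v), T.lapMatrix ℚ (σ v) v = 1 := by
      refine prod_involution (fun a _ => σ a) ?_ ?_ ?_ ?_
      · intro a ha
        have ha' : σ a ≠ a := (mem_filter.1 ha).2
        rw [lap_adj T (hP a ha')]
        have : T.lapMatrix ℚ (σ (σ a)) (σ a) = -1 := by
          rw [hinv a]
          exact lap_adj T (hP a ha').symm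
        rw [this]
        norm_num
      · intro a ha _
        exact (mem_filter.1 ha).2
      · intro a ha
        refine mem_filter.2 ⟨mem_univ _, ?_⟩
        intro h
        exact (mem_filter.1 ha).2 (((hinv a).symm.trans h).symm)
      · intro a _
        exact hinv a
    rw [h1, h2, mul_one]
end

section
/- The tree T(3,3,3) on 21 vertices satisfies π(T(3,3,3)) = 2·(3/2)^9, i.e., it attains the conjectured odd-order upper bound 2·(3/2)^{(n−3)/2} with n = 21. -/
open Finset SimpleGraph Matrix

/-- The tree `T(a₀,…,a_{m-1})`: a core path on `Fin m`, with `a i` pendant paths of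
length two attached to core vertex `i`.  A pendant path at `i` consists of a middle
vertex `⟨i, p, false⟩` and a leaf `⟨i, p, true⟩`. -/
def Tfam (m : ℕ) (a : ℕ → ℕ) :
    SimpleGraph (Fin m ⊕ (Σ i : Fin m, Fin (a i) × Bool)) :=
  SimpleGraph.fromRel (fun u v =>
    match u, v with
    | Sum.inl i, Sum.inl j => (j : ℕ) = (i : ℕ) + 1
    | Sum.inl i, Sum.inr ⟨i', _, b⟩ => i = i' ∧ b = false
    | Sum.inr ⟨i, p, b⟩, Sum.inr ⟨i', p', b'⟩ =>
        i = i' ∧ HEq p p' ∧ b = false ∧ b' = true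
    | _, _ => False)

noncomputable instance (m : ℕ) (a : ℕ → ℕ) : DecidableRel (Tfam m a).Adj :=
  Classical.decRel _

/-- The Laplacian ratio `π(G) = per(L(G)) / ∏_v d(v)` (with rational values). -/
noncomputable def lapRatio {V : Type*} [Fintype V] [DecidableEq V]
    (G : SimpleGraph V) [DecidableRel G.Adj] : ℚ :=
  (G.lapMatrix ℚ).permanent / ∏ v, (G.degree v : ℚ)

/-- The degree of core vertex `xᵢ` (0-indexed) in `T(a₀,…,a_{m-1})`. -/
def coreDeg (m : ℕ) (a : ℕ → ℕ) (i : ℕ) : ℚ :=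
  (a i : ℚ) + (if i = 0 ∨ i = m - 1 then 1 else 2)

/-- The two-term recurrence `f₀ = 1`, `f₁ = 1 + a₁/(3d₁)`,
`fᵢ = (1 + aᵢ/(3dᵢ)) f_{i-1} + f_{i-2}/(d_{i-1} dᵢ)` (0-indexed data). -/
def fseq (a : ℕ → ℕ) (d : ℕ → ℚ) : ℕ → ℚ
  | 0 => 1
  | 1 => 1 + (a 0 : ℚ) / (3 * d 0)
  | (i + 2) =>
      (1 + (a (i + 1) : ℚ) / (3 * d (i + 1))) * fseq a d (i + 1)
        + fseq a d i / (d i * d (i + 1))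

set_option maxRecDepth 40000
set_option maxHeartbeats 4000000

section PermanentLemmas

open Equiv

variable {R : Type*} [CommSemiring R] {n m : Type*} [DecidableEq n] [Fintype n]
  [DecidableEq m] [Fintype m]

theorem permanent_submatrix_equiv_self' (e : n ≃ m) (A : Matrix m m R) :
    (A.submatrix e e).permanent = A.permanent := by
  rw [Matrix.permanent, Matrix.permanent]
  apply Fintype.sum_equiv (Equiv.permCongr e)
  intro σ
  apply Fintype.prod_equiv e
  intro i
  rw [Equiv.permCongr_apply, Equiv.symm_apply_apply, Matrix.submatrix_apply]

theorem permanent_submatrix_equivs' (e f : n ≃ m) (A : Matrix m m R) :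
    (A.submatrix e f).permanent = A.permanent := by
  have h : A.submatrix e f = (A.submatrix e e).submatrix id (f.trans e.symm) := by
    ext i j
    simp [Matrix.submatrix_apply]
  rw [h, Matrix.permanent_permute_rows, permanent_submatrix_equiv_self']

theorem RingHom.map_permanent' {S : Type*} [CommSemiring S] (f : R →+* S)
    (M : Matrix n n R) :
    f M.permanent = (M.map f).permanent := by
  simp [Matrix.permanent, map_sum, map_prod, Matrix.map_apply]

theorem permanent_succ_column_zero' {N : ℕ} (A : Matrix (Fin N.succ) (Fin N.succ) R) :
    A.permanent = ∑ i : Fin N.succ, A i 0 * (A.submatrix i.succAbove Fin.succ).permanent := by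
  rw [Matrix.permanent, Finset.univ_perm_fin_succ, ← Finset.univ_product_univ]
  simp only [Finset.sum_map, Equiv.toEmbedding_apply, Finset.sum_product, Matrix.submatrix]
  refine Finset.sum_congr rfl fun i _ => Fin.cases ?_ (fun i => ?_) i
  · simp only [Matrix.permanent, Finset.mul_sum]
    refine Finset.sum_congr rfl fun σ _ => ?_
    rw [Fin.prod_univ_succ]
    simp [Equiv.Perm.decomposeFin_symm_apply_zero,
      Equiv.Perm.decomposeFin_symm_apply_succ, Fin.succAbove_zero, Matrix.of_apply]
  · have hB := Matrix.permanent_permute_cols (Fin.cycleRange i)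
      (Matrix.of (fun k j : Fin N => A ((Fin.succ i).succAbove k) (Fin.succ j)))
    rw [← hB, Matrix.permanent, Finset.mul_sum]
    refine Finset.sum_congr rfl fun σ _ => ?_
    rw [Fin.prod_univ_succ]
    simp only [Equiv.Perm.decomposeFin_symm_apply_zero,
      Equiv.Perm.decomposeFin_symm_apply_succ, Matrix.submatrix_apply, id,
      Matrix.of_apply, Fin.succAbove_cycleRange]

theorem permanent_updateCol_add' (M : Matrix n n R) (j : n) (u v : n → R) :
    (M.updateCol j (u + v)).permanent
      = (M.updateCol j u).permanent + (M.updateCol j v).permanent := by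
  simp only [Matrix.permanent, ← Finset.sum_add_distrib]
  refine Finset.sum_congr rfl fun σ _ => ?_
  rw [← Finset.mul_prod_erase _ _ (Finset.mem_univ j),
      ← Finset.mul_prod_erase _ _ (Finset.mem_univ j),
      ← Finset.mul_prod_erase _ _ (Finset.mem_univ j)]
  have h : ∀ i ∈ Finset.univ.erase j, ∀ w : n → R,
      (M.updateCol j w) (σ i) i = M (σ i) i := by
    intro i hi w
    rw [Matrix.updateCol_ne (Finset.ne_of_mem_erase hi)]
  rw [Finset.prod_congr rfl (fun i hi => h i hi (u + v)),
      Finset.prod_congr rfl (fun i hi => h i hi u),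
      Finset.prod_congr rfl (fun i hi => h i hi v)]
  simp only [Matrix.updateCol_self, Pi.add_apply, add_mul]

theorem permanent_eq_zero_of_support {R : Type*} [CommRing R] [NoZeroDivisors R]
    (M : Matrix n n R) (S T : Finset n)
    (h : ∀ i ∈ S, ∀ j, M i j ≠ 0 → j ∈ T) (hc : T.card < S.card) :
    M.permanent = 0 := by
  rw [Matrix.permanent]
  refine Finset.sum_eq_zero fun σ _ => ?_
  by_contra hp
  have hall : ∀ i, M (σ i) i ≠ 0 := by
    intro i hi
    exact hp (Finset.prod_eq_zero (Finset.mem_univ i) hi)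
  have hmap : ∀ i ∈ S, σ⁻¹ i ∈ T := by
    intro i hiS
    have := hall (σ⁻¹ i)
    rw [show σ (σ⁻¹ i) = i from σ.apply_symm_apply i] at this
    exact h i hiS _ this
  have : S.card ≤ T.card :=
    Finset.card_le_card_of_injOn (fun i => σ⁻¹ i) hmap
      (fun a _ b _ hab => (Equiv.injective σ⁻¹) hab)
  omega

theorem permanent_fromBlocks_zero (A : Matrix m m R) (D : Matrix n n R) :
    (Matrix.fromBlocks A 0 0 D).permanent = A.permanent * D.permanent := by
  classical
  simp_rw [Matrix.permanent]
  convert Eq.symm <|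
    Finset.sum_subset (M := R)
      (Finset.subset_univ
        ((Equiv.Perm.sumCongrHom m n).range : Set (Equiv.Perm (m ⊕ n))).toFinset) ?_
  · simp_rw [Finset.sum_mul_sum, ← Finset.sum_product', Finset.univ_product_univ]
    refine Finset.sum_nbij (fun σ ↦ σ.fst.sumCongr σ.snd) ?_ ?_ ?_ ?_
    · intro σ₁₂ _
      erw [Set.mem_toFinset, MonoidHom.mem_range]
      use σ₁₂
      simp only [Equiv.Perm.sumCongrHom_apply]
    · intro σ₁ _ σ₂ _
      dsimp only
      intro h
      have h2 : ∀ x, Equiv.Perm.sumCongr σ₁.fst σ₁.snd x = Equiv.Perm.sumCongr σ₂.fst σ₂.snd x :=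
        DFunLike.congr_fun h
      simp only [Sum.map_inr, Sum.map_inl, Equiv.Perm.sumCongr_apply, Sum.forall, Sum.inl.injEq,
        Sum.inr.injEq] at h2
      ext x
      · exact h2.left x
      · exact h2.right x
    · intro σ hσ
      erw [Set.mem_toFinset, MonoidHom.mem_range] at hσ
      obtain ⟨σ₁₂, hσ₁₂⟩ := hσ
      use σ₁₂
      rw [← hσ₁₂]
      simp
    · simp only [forall_prop_of_true, Prod.forall, Finset.mem_univ]
      intro σ₁ σ₂
      rw [Fintype.prod_sum_type]
      simp_rw [Equiv.sumCongr_apply, Sum.map_inr, Sum.map_inl, Matrix.fromBlocks_apply₁₁,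
        Matrix.fromBlocks_apply₂₂]
  · rintro σ - hσn
    have h1 : ¬∀ x, ∃ y, Sum.inl y = σ (Sum.inl x) := by
      rw [Set.mem_toFinset] at hσn
      simpa only [Set.MapsTo, Set.mem_range, forall_exists_index, forall_apply_eq_imp_iff] using
        mt Equiv.Perm.mem_sumCongrHom_range_of_perm_mapsTo_inl hσn
    obtain ⟨a, ha⟩ := not_forall.mp h1
    cases' hx : σ (Sum.inl a) with a2 b
    · have hn := (not_exists.mp ha) a2
      exact absurd hx.symm hn
    · rw [Finset.prod_eq_zero (Finset.mem_univ (Sum.inl a))]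
      rw [hx, Matrix.fromBlocks_apply₂₁, Matrix.zero_apply]

end PermanentLemmas

def perAux : (N : ℕ) → Matrix (Fin N) (Fin N) ℤ → ℤ
  | 0, _ => 1
  | N + 1, M =>
      ∑ i : Fin (N + 1),
        if M i 0 = 0 then 0 else M i 0 * perAux N (M.submatrix i.succAbove Fin.succ)

theorem perAux_eq : ∀ (N : ℕ) (M : Matrix (Fin N) (Fin N) ℤ), perAux N M = M.permanent := by
  intro N
  induction N with
  | zero => intro M; rw [perAux, Matrix.permanent_isEmpty]
  | succ N ih =>
    intro M
    rw [perAux, permanent_succ_column_zero']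
    refine Finset.sum_congr rfl fun i _ => ?_
    rw [ih]
    split
    · simp [*]
    · rfl

section GraphSide

abbrev V21 := Fin 3 ⊕ (Σ _ : Fin 3, Fin 3 × Bool)

def rb : V21 → V21 → Bool
  | Sum.inl i, Sum.inl j => (j : ℕ) == (i : ℕ) + 1
  | Sum.inl i, Sum.inr ⟨i', _, b⟩ => i == i' && b == false
  | Sum.inr ⟨i, p, b⟩, Sum.inr ⟨i', p', b'⟩ => i == i' && p == p' && b == false && b' == true
  | _, _ => false

def adjb (u v : V21) : Bool := u != v && (rb u v || rb v u)

lemma adj_iff (u v : V21) : (Tfam 3 fun _ => 3).Adj u v ↔ adjb u v = true := by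
  rcases u with i | ⟨i, p, b⟩ <;> rcases v with j | ⟨j, q, c⟩ <;>
    simp [Tfam, SimpleGraph.fromRel_adj, adjb, rb]
  · revert i j; decide
  · revert i j q c; decide
  · revert i p b j; decide
  · revert i p b j q c; decide

def degz (v : V21) : ℤ := ((Finset.univ.filter fun u => adjb v u = true).card : ℤ)

def Lz : Matrix V21 V21 ℤ := fun i j =>
  if i = j then degz i else if adjb i j then -1 else 0

lemma degree_eq (v : V21) :
    ((Tfam 3 fun _ => 3).degree v : ℤ) = degz v := by
  have h : (Tfam 3 fun _ => 3).neighborFinset v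
      = Finset.univ.filter (fun u => adjb v u = true) := by
    ext u
    rw [SimpleGraph.mem_neighborFinset, Finset.mem_filter]
    simp [adj_iff]
  rw [SimpleGraph.degree, h, degz]

lemma lap_eq : (Tfam 3 fun _ => 3).lapMatrix ℚ = Lz.map ⇑(Int.castRingHom ℚ) := by
  ext i j
  simp only [SimpleGraph.lapMatrix, SimpleGraph.degMatrix, Matrix.sub_apply,
    Matrix.diagonal_apply, SimpleGraph.adjMatrix_apply, Matrix.map_apply, Lz,
    Int.coe_castRingHom]
  by_cases hij : i = j
  · subst hij
    rw [if_pos rfl, if_pos rfl, if_neg (SimpleGraph.irrefl (G := Tfam 3 fun _ => 3)), sub_zero,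
      ← degree_eq]
    push_cast
    ring
  · rw [if_neg hij, if_neg hij]
    by_cases h : adjb i j = true
    · rw [if_pos ((adj_iff i j).mpr h), if_pos h]; norm_num
    · rw [if_neg (fun hh => h ((adj_iff i j).mp hh)), if_neg h]; norm_num

def fEnum : Fin 21 → V21 :=
  ![Sum.inr ⟨0, 0, false⟩, Sum.inr ⟨0, 0, true⟩, Sum.inr ⟨0, 1, false⟩, Sum.inr ⟨0, 1, true⟩,
    Sum.inr ⟨0, 2, false⟩, Sum.inr ⟨0, 2, true⟩, Sum.inl 0,
    Sum.inr ⟨1, 0, false⟩, Sum.inr ⟨1, 0, true⟩, Sum.inr ⟨1, 1, false⟩, Sum.inr ⟨1, 1, true⟩,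
    Sum.inr ⟨1, 2, false⟩, Sum.inr ⟨1, 2, true⟩, Sum.inl 1,
    Sum.inr ⟨2, 0, false⟩, Sum.inr ⟨2, 0, true⟩, Sum.inr ⟨2, 1, false⟩, Sum.inr ⟨2, 1, true⟩,
    Sum.inr ⟨2, 2, false⟩, Sum.inr ⟨2, 2, true⟩, Sum.inl 2]

lemma fEnum_bij : Function.Bijective fEnum := by decide

noncomputable def eEnum : Fin 21 ≃ V21 := Equiv.ofBijective fEnum fEnum_bij

end GraphSide

def LL : Matrix (Fin 21) (Fin 21) ℤ :=
  !![2, -1, 0, 0, 0, 0, -1, 0, 0, 0, 0, 0, 0, 0, 0, 0, 0, 0, 0, 0, 0;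
     -1, 1, 0, 0, 0, 0, 0, 0, 0, 0, 0, 0, 0, 0, 0, 0, 0, 0, 0, 0, 0;
     0, 0, 2, -1, 0, 0, -1, 0, 0, 0, 0, 0, 0, 0, 0, 0, 0, 0, 0, 0, 0;
     0, 0, -1, 1, 0, 0, 0, 0, 0, 0, 0, 0, 0, 0, 0, 0, 0, 0, 0, 0, 0;
     0, 0, 0, 0, 2, -1, -1, 0, 0, 0, 0, 0, 0, 0, 0, 0, 0, 0, 0, 0, 0;
     0, 0, 0, 0, -1, 1, 0, 0, 0, 0, 0, 0, 0, 0, 0, 0, 0, 0, 0, 0, 0;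
     -1, 0, -1, 0, -1, 0, 4, 0, 0, 0, 0, 0, 0, -1, 0, 0, 0, 0, 0, 0, 0;
     0, 0, 0, 0, 0, 0, 0, 2, -1, 0, 0, 0, 0, -1, 0, 0, 0, 0, 0, 0, 0;
     0, 0, 0, 0, 0, 0, 0, -1, 1, 0, 0, 0, 0, 0, 0, 0, 0, 0, 0, 0, 0;
     0, 0, 0, 0, 0, 0, 0, 0, 0, 2, -1, 0, 0, -1, 0, 0, 0, 0, 0, 0, 0;
     0, 0, 0, 0, 0, 0, 0, 0, 0, -1, 1, 0, 0, 0, 0, 0, 0, 0, 0, 0, 0;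
     0, 0, 0, 0, 0, 0, 0, 0, 0, 0, 0, 2, -1, -1, 0, 0, 0, 0, 0, 0, 0;
     0, 0, 0, 0, 0, 0, 0, 0, 0, 0, 0, -1, 1, 0, 0, 0, 0, 0, 0, 0, 0;
     0, 0, 0, 0, 0, 0, -1, -1, 0, -1, 0, -1, 0, 5, 0, 0, 0, 0, 0, 0, -1;
     0, 0, 0, 0, 0, 0, 0, 0, 0, 0, 0, 0, 0, 0, 2, -1, 0, 0, 0, 0, -1;
     0, 0, 0, 0, 0, 0, 0, 0, 0, 0, 0, 0, 0, 0, -1, 1, 0, 0, 0, 0, 0;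
     0, 0, 0, 0, 0, 0, 0, 0, 0, 0, 0, 0, 0, 0, 0, 0, 2, -1, 0, 0, -1;
     0, 0, 0, 0, 0, 0, 0, 0, 0, 0, 0, 0, 0, 0, 0, 0, -1, 1, 0, 0, 0;
     0, 0, 0, 0, 0, 0, 0, 0, 0, 0, 0, 0, 0, 0, 0, 0, 0, 0, 2, -1, -1;
     0, 0, 0, 0, 0, 0, 0, 0, 0, 0, 0, 0, 0, 0, 0, 0, 0, 0, -1, 1, 0;
     0, 0, 0, 0, 0, 0, 0, 0, 0, 0, 0, 0, 0, -1, -1, 0, -1, 0, -1, 0, 4]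

def u6 : Fin 21 → ℤ := ![-1, 0, -1, 0, -1, 0, 4, 0, 0, 0, 0, 0, 0, 0, 0, 0, 0, 0, 0, 0, 0]

def v6 : Fin 21 → ℤ := ![0, 0, 0, 0, 0, 0, 0, 0, 0, 0, 0, 0, 0, -1, 0, 0, 0, 0, 0, 0, 0]

def u20 : Fin 21 → ℤ := ![0, 0, 0, 0, 0, 0, 0, 0, 0, 0, 0, 0, 0, 0, -1, 0, -1, 0, -1, 0, 4]

def v20 : Fin 21 → ℤ := ![0, 0, 0, 0, 0, 0, 0, 0, 0, 0, 0, 0, 0, -1, 0, 0, 0, 0, 0, 0, 0]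

def w13 : Fin 21 → ℤ := ![0, 0, 0, 0, 0, 0, 0, -1, 0, -1, 0, -1, 0, 5, 0, 0, 0, 0, 0, 0, 0]

def a13 : Fin 21 → ℤ := ![0, 0, 0, 0, 0, 0, -1, 0, 0, 0, 0, 0, 0, 0, 0, 0, 0, 0, 0, 0, 0]

def c13 : Fin 21 → ℤ := ![0, 0, 0, 0, 0, 0, 0, 0, 0, 0, 0, 0, 0, 0, 0, 0, 0, 0, 0, 0, -1]

def B1 : Matrix (Fin 7) (Fin 7) ℤ :=
  !![2, -1, 0, 0, 0, 0, -1;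
     -1, 1, 0, 0, 0, 0, 0;
     0, 0, 2, -1, 0, 0, -1;
     0, 0, -1, 1, 0, 0, 0;
     0, 0, 0, 0, 2, -1, -1;
     0, 0, 0, 0, -1, 1, 0;
     -1, 0, -1, 0, -1, 0, 4]

def B2 : Matrix (Fin 7) (Fin 7) ℤ :=
  !![2, -1, 0, 0, 0, 0, -1;
     -1, 1, 0, 0, 0, 0, 0;
     0, 0, 2, -1, 0, 0, -1;
     0, 0, -1, 1, 0, 0, 0;
     0, 0, 0, 0, 2, -1, -1;
     0, 0, 0, 0, -1, 1, 0;
     -1, 0, -1, 0, -1, 0, 5]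

def B3 : Matrix (Fin 7) (Fin 7) ℤ :=
  !![2, -1, 0, 0, 0, 0, -1;
     -1, 1, 0, 0, 0, 0, 0;
     0, 0, 2, -1, 0, 0, -1;
     0, 0, -1, 1, 0, 0, 0;
     0, 0, 0, 0, 2, -1, -1;
     0, 0, 0, 0, -1, 1, 0;
     -1, 0, -1, 0, -1, 0, 4]

def X1 : Matrix (Fin 7) (Fin 7) ℤ :=
  !![2, -1, 0, 0, 0, 0, 0;
     -1, 1, 0, 0, 0, 0, 0;
     0, 0, 2, -1, 0, 0, 0;
     0, 0, -1, 1, 0, 0, 0;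
     0, 0, 0, 0, 2, -1, 0;
     0, 0, 0, 0, -1, 1, 0;
     -1, 0, -1, 0, -1, 0, -1]

def X2 : Matrix (Fin 7) (Fin 7) ℤ :=
  !![0, 2, -1, 0, 0, 0, 0;
     0, -1, 1, 0, 0, 0, 0;
     0, 0, 0, 2, -1, 0, 0;
     0, 0, 0, -1, 1, 0, 0;
     0, 0, 0, 0, 0, 2, -1;
     0, 0, 0, 0, 0, -1, 1;
     -1, -1, 0, -1, 0, -1, 0]

def Y2 : Matrix (Fin 7) (Fin 7) ℤ :=
  !![2, -1, 0, 0, 0, 0, 0;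
     -1, 1, 0, 0, 0, 0, 0;
     0, 0, 2, -1, 0, 0, 0;
     0, 0, -1, 1, 0, 0, 0;
     0, 0, 0, 0, 2, -1, 0;
     0, 0, 0, 0, -1, 1, 0;
     -1, 0, -1, 0, -1, 0, -1]

def Y3 : Matrix (Fin 7) (Fin 7) ℤ :=
  !![0, 2, -1, 0, 0, 0, 0;
     0, -1, 1, 0, 0, 0, 0;
     0, 0, 0, 2, -1, 0, 0;
     0, 0, 0, -1, 1, 0, 0;
     0, 0, 0, 0, 0, 2, -1;
     0, 0, 0, 0, 0, -1, 1;
     -1, -1, 0, -1, 0, -1, 0]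

def MA : Matrix (Fin 21) (Fin 21) ℤ := LL.updateCol 6 u6
def MB : Matrix (Fin 21) (Fin 21) ℤ := LL.updateCol 6 v6
def MAu : Matrix (Fin 21) (Fin 21) ℤ := MA.updateCol 20 u20
def MAv : Matrix (Fin 21) (Fin 21) ℤ := MA.updateCol 20 v20
def MBu : Matrix (Fin 21) (Fin 21) ℤ := MB.updateCol 20 u20
def MBv : Matrix (Fin 21) (Fin 21) ℤ := MB.updateCol 20 v20
def Tuwu : Matrix (Fin 21) (Fin 21) ℤ := MAu.updateCol 13 w13
def Tuau : Matrix (Fin 21) (Fin 21) ℤ := MAu.updateCol 13 a13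
def Tucu : Matrix (Fin 21) (Fin 21) ℤ := MAu.updateCol 13 c13
def Tuwv : Matrix (Fin 21) (Fin 21) ℤ := MAv.updateCol 13 w13
def Tuav : Matrix (Fin 21) (Fin 21) ℤ := MAv.updateCol 13 a13
def Tucv : Matrix (Fin 21) (Fin 21) ℤ := MAv.updateCol 13 c13
def Tvwu : Matrix (Fin 21) (Fin 21) ℤ := MBu.updateCol 13 w13
def Tvau : Matrix (Fin 21) (Fin 21) ℤ := MBu.updateCol 13 a13
def Tvcu : Matrix (Fin 21) (Fin 21) ℤ := MBu.updateCol 13 c13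
def Tvwv : Matrix (Fin 21) (Fin 21) ℤ := MBv.updateCol 13 w13
def Tvav : Matrix (Fin 21) (Fin 21) ℤ := MBv.updateCol 13 a13
def Tvcv : Matrix (Fin 21) (Fin 21) ℤ := MBv.updateCol 13 c13

def tripleFun (p q r : Fin 7 → Fin 21) : Fin 7 ⊕ (Fin 7 ⊕ Fin 7) → Fin 21
  | Sum.inl k => p k
  | Sum.inr (Sum.inl k) => q k
  | Sum.inr (Sum.inr k) => r k

lemma tripleR_bij : Function.Bijective
    (tripleFun ![0,1,2,3,4,5,6] ![7,8,9,10,11,12,13] ![14,15,16,17,18,19,20]) := by decide +kernel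

lemma tripleC2_bij : Function.Bijective
    (tripleFun ![0,1,2,3,4,5,13] ![6,7,8,9,10,11,12] ![14,15,16,17,18,19,20]) := by decide +kernel

lemma tripleC3_bij : Function.Bijective
    (tripleFun ![0,1,2,3,4,5,6] ![7,8,9,10,11,12,20] ![13,14,15,16,17,18,19]) := by decide +kernel

noncomputable def eR : (Fin 7 ⊕ (Fin 7 ⊕ Fin 7)) ≃ Fin 21 := Equiv.ofBijective _ tripleR_bij
noncomputable def eC2 : (Fin 7 ⊕ (Fin 7 ⊕ Fin 7)) ≃ Fin 21 := Equiv.ofBijective _ tripleC2_bij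
noncomputable def eC3 : (Fin 7 ⊕ (Fin 7 ⊕ Fin 7)) ≃ Fin 21 := Equiv.ofBijective _ tripleC3_bij

lemma pB1 : B1.permanent = 135 := by rw [← perAux_eq]; decide +kernel
lemma pB2 : B2.permanent = 162 := by rw [← perAux_eq]; decide +kernel
lemma pB3 : B3.permanent = 135 := by rw [← perAux_eq]; decide +kernel
lemma pX1 : X1.permanent = -27 := by rw [← perAux_eq]; decide +kernel
lemma pX2 : X2.permanent = -27 := by rw [← perAux_eq]; decide +kernel
lemma pY2 : Y2.permanent = -27 := by rw [← perAux_eq]; decide +kernel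
lemma pY3 : Y3.permanent = -27 := by rw [← perAux_eq]; decide +kernel

lemma pTuwu : Tuwu.permanent = 2952450 := by
  rw [← permanent_submatrix_equivs' eR eR Tuwu,
    show Tuwu.submatrix ⇑eR ⇑eR = Matrix.fromBlocks B1 0 0 (Matrix.fromBlocks B2 0 0 B3) from by
      decide +kernel,
    permanent_fromBlocks_zero, permanent_fromBlocks_zero, pB1, pB2, pB3]
  norm_num

lemma pTvau : Tvau.permanent = 98415 := by
  rw [← permanent_submatrix_equivs' eR eC2 Tvau,
    show Tvau.submatrix ⇑eR ⇑eC2 = Matrix.fromBlocks X1 0 0 (Matrix.fromBlocks X2 0 0 B3) from by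
      decide +kernel,
    permanent_fromBlocks_zero, permanent_fromBlocks_zero, pX1, pX2, pB3]
  norm_num

lemma pTucv : Tucv.permanent = 98415 := by
  rw [← permanent_submatrix_equivs' eR eC3 Tucv,
    show Tucv.submatrix ⇑eR ⇑eC3 = Matrix.fromBlocks B1 0 0 (Matrix.fromBlocks Y2 0 0 Y3) from by
      decide +kernel,
    permanent_fromBlocks_zero, permanent_fromBlocks_zero, pB1, pY2, pY3]
  norm_num

lemma pTuwv : Tuwv.permanent = 0 :=
  permanent_eq_zero_of_support Tuwv ({14,15,16,17,18,19,20} : Finset (Fin 21)) ({14,15,16,17,18,19} : Finset (Fin 21)) (by intro i hi; fin_cases hi <;> decide +kernel) (by decide)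

lemma pTuau : Tuau.permanent = 0 :=
  permanent_eq_zero_of_support Tuau ({7,8,9,10,11,12,13} : Finset (Fin 21)) ({7,8,9,10,11,12} : Finset (Fin 21)) (by intro i hi; fin_cases hi <;> decide +kernel) (by decide)

lemma pTuav : Tuav.permanent = 0 :=
  permanent_eq_zero_of_support Tuav ({14,15,16,17,18,19,20} : Finset (Fin 21)) ({14,15,16,17,18,19} : Finset (Fin 21)) (by intro i hi; fin_cases hi <;> decide +kernel) (by decide)

lemma pTucu : Tucu.permanent = 0 :=
  permanent_eq_zero_of_support Tucu ({7,8,9,10,11,12,13} : Finset (Fin 21)) ({7,8,9,10,11,12} : Finset (Fin 21)) (by intro i hi; fin_cases hi <;> decide +kernel) (by decide)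

lemma pTvwu : Tvwu.permanent = 0 :=
  permanent_eq_zero_of_support Tvwu ({0,1,2,3,4,5,6} : Finset (Fin 21)) ({0,1,2,3,4,5} : Finset (Fin 21)) (by intro i hi; fin_cases hi <;> decide +kernel) (by decide)

lemma pTvwv : Tvwv.permanent = 0 :=
  permanent_eq_zero_of_support Tvwv ({0,1,2,3,4,5,6} : Finset (Fin 21)) ({0,1,2,3,4,5} : Finset (Fin 21)) (by intro i hi; fin_cases hi <;> decide +kernel) (by decide)

lemma pTvav : Tvav.permanent = 0 :=
  permanent_eq_zero_of_support Tvav ({14,15,16,17,18,19,20} : Finset (Fin 21)) ({14,15,16,17,18,19} : Finset (Fin 21)) (by intro i hi; fin_cases hi <;> decide +kernel) (by decide)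

lemma pTvcu : Tvcu.permanent = 0 :=
  permanent_eq_zero_of_support Tvcu ({0,1,2,3,4,5,6} : Finset (Fin 21)) ({0,1,2,3,4,5} : Finset (Fin 21)) (by intro i hi; fin_cases hi <;> decide +kernel) (by decide)

lemma pTvcv : Tvcv.permanent = 0 :=
  permanent_eq_zero_of_support Tvcv ({0,1,2,3,4,5,6} : Finset (Fin 21)) ({0,1,2,3,4,5} : Finset (Fin 21)) (by intro i hi; fin_cases hi <;> decide +kernel) (by decide)


lemma perLL : LL.permanent = 3149280 := by
  have c6 : u6 + v6 = (fun i => LL i 6) := by decide +kernel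
  have c20A : u20 + v20 = (fun i => MA i 20) := by decide +kernel
  have c20B : u20 + v20 = (fun i => MB i 20) := by decide +kernel
  have c13Au : w13 + (a13 + c13) = (fun i => MAu i 13) := by decide +kernel
  have c13Av : w13 + (a13 + c13) = (fun i => MAv i 13) := by decide +kernel
  have c13Bu : w13 + (a13 + c13) = (fun i => MBu i 13) := by decide +kernel
  have c13Bv : w13 + (a13 + c13) = (fun i => MBv i 13) := by decide +kernel
  have eqLL : LL = LL.updateCol 6 (u6 + v6) := by
    rw [c6, Matrix.updateCol_eq_self]
  have eqMA : MA = MA.updateCol 20 (u20 + v20) := by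
    rw [c20A, Matrix.updateCol_eq_self]
  have eqMB : MB = MB.updateCol 20 (u20 + v20) := by
    rw [c20B, Matrix.updateCol_eq_self]
  have eqMAu : MAu = MAu.updateCol 13 (w13 + (a13 + c13)) := by
    rw [c13Au, Matrix.updateCol_eq_self]
  have eqMAv : MAv = MAv.updateCol 13 (w13 + (a13 + c13)) := by
    rw [c13Av, Matrix.updateCol_eq_self]
  have eqMBu : MBu = MBu.updateCol 13 (w13 + (a13 + c13)) := by
    rw [c13Bu, Matrix.updateCol_eq_self]
  have eqMBv : MBv = MBv.updateCol 13 (w13 + (a13 + c13)) := by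
    rw [c13Bv, Matrix.updateCol_eq_self]
  have h1 : LL.permanent = MA.permanent + MB.permanent := by
    conv_lhs => rw [eqLL]
    exact permanent_updateCol_add' LL 6 u6 v6
  have hMA : MA.permanent = MAu.permanent + MAv.permanent := by
    conv_lhs => rw [eqMA]
    exact permanent_updateCol_add' MA 20 u20 v20
  have hMB : MB.permanent = MBu.permanent + MBv.permanent := by
    conv_lhs => rw [eqMB]
    exact permanent_updateCol_add' MB 20 u20 v20
  have hMAu : MAu.permanent = Tuwu.permanent + (Tuau.permanent + Tucu.permanent) := by
    conv_lhs => rw [eqMAu]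
    rw [permanent_updateCol_add', permanent_updateCol_add']
    rfl
  have hMAv : MAv.permanent = Tuwv.permanent + (Tuav.permanent + Tucv.permanent) := by
    conv_lhs => rw [eqMAv]
    rw [permanent_updateCol_add', permanent_updateCol_add']
    rfl
  have hMBu : MBu.permanent = Tvwu.permanent + (Tvau.permanent + Tvcu.permanent) := by
    conv_lhs => rw [eqMBu]
    rw [permanent_updateCol_add', permanent_updateCol_add']
    rfl
  have hMBv : MBv.permanent = Tvwv.permanent + (Tvav.permanent + Tvcv.permanent) := by
    conv_lhs => rw [eqMBv]
    rw [permanent_updateCol_add', permanent_updateCol_add']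
    rfl
  rw [h1, hMA, hMB, hMAu, hMAv, hMBu, hMBv,
    pTuwu, pTuau, pTucu, pTuwv, pTuav, pTucv,
    pTvwu, pTvau, pTvcu, pTvwv, pTvav, pTvcv]
  norm_num

lemma hLLsub : Lz.submatrix ⇑eEnum ⇑eEnum = LL := by decide +kernel

lemma perLz : Lz.permanent = 3149280 := by
  rw [← permanent_submatrix_equiv_self' eEnum Lz, hLLsub, perLL]

lemma degProd : (∏ v : V21, degz v) = 40960 := by decide +kernel

/-- `T(3,3,3)` (on 21 vertices) attains the conjectured odd-order bound:
`π(T(3,3,3)) = 2 · (3/2)^9`. -/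
theorem lapRatio_T333 : lapRatio (Tfam 3 (fun _ => 3)) = 2 * (3 / 2 : ℚ) ^ 9 := by
  have hper : ((Tfam 3 (fun _ => 3)).lapMatrix ℚ).permanent = 3149280 := by
    rw [lap_eq, ← RingHom.map_permanent' (Int.castRingHom ℚ) Lz, perLz]
    norm_num
  have hdeg : (∏ v, ((Tfam 3 (fun _ => 3)).degree v : ℚ)) = 40960 := by
    have hd : ∀ v : V21, ((Tfam 3 (fun _ => 3)).degree v : ℚ) = ((degz v : ℤ) : ℚ) := by
      intro v
      rw [← degree_eq]
      push_cast
      ring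
    calc (∏ v, ((Tfam 3 (fun _ => 3)).degree v : ℚ))
        = ∏ v : V21, ((degz v : ℤ) : ℚ) := Finset.prod_congr rfl (fun v _ => hd v)
      _ = (((∏ v : V21, degz v) : ℤ) : ℚ) := by push_cast; ring
      _ = 40960 := by rw [degProd]; norm_num
  rw [lapRatio, hper, hdeg]
  norm_num
end

section
/- For every integer t ≥ 4, the Laplacian ratio of B_t = T(t,t,t,t) satisfies π(B_t) = (3/2)^{4t} · 2(128t^4 + 576t^3 + 1152t^2 + 1080t + 405) / (81(t+1)^2(t+2)^2). -/
open Finset SimpleGraph Matrix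

namespace LapB

variable {t : ℕ}

abbrev V (t : ℕ) := Fin 4 ⊕ (Σ _i : Fin 4, Fin t × Bool)

abbrev B (t : ℕ) : SimpleGraph (V t) := Tfam 4 (fun _ => t)

def co (t : ℕ) (i : Fin 4) : V t := Sum.inl i
def md (i : Fin 4) (p : Fin t) : V t := Sum.inr ⟨i, (p, false)⟩
def lf (i : Fin 4) (p : Fin t) : V t := Sum.inr ⟨i, (p, true)⟩

def Rel' : V t → V t → Prop := fun u v =>
  match u, v with
  | Sum.inl i, Sum.inl j => (j : ℕ) = (i : ℕ) + 1 ∨ (i : ℕ) = (j : ℕ) + 1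
  | Sum.inl i, Sum.inr ⟨i', (_, b)⟩ => i = i' ∧ b = false
  | Sum.inr ⟨i', (_, b)⟩, Sum.inl i => i = i' ∧ b = false
  | Sum.inr ⟨i, (p, b)⟩, Sum.inr ⟨i', (p', b')⟩ => i = i' ∧ p = p' ∧ b ≠ b'

lemma adj_iff {u v : V t} : (B t).Adj u v ↔ Rel' u v := by
  rcases u with i | ⟨i, p, b⟩ <;> rcases v with j | ⟨j, q, c⟩ <;>
    simp only [B, Tfam, fromRel_adj, Rel', ne_eq, Sum.inl.injEq, Sum.inr.injEq,
      Sigma.mk.inj_iff, heq_eq_eq, Prod.mk.injEq]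
  · constructor
    · rintro ⟨hne, h | h⟩
      · exact Or.inl h
      · exact Or.inr h
    · rintro (h | h)
      · exact ⟨by rintro rfl; omega, Or.inl h⟩
      · exact ⟨by rintro rfl; omega, Or.inr h⟩
  · constructor
    · rintro ⟨_, h | h⟩
      · exact h
      · exact absurd h id
    · rintro ⟨rfl, rfl⟩; exact ⟨by simp, Or.inl ⟨rfl, rfl⟩⟩
  · constructor
    · rintro ⟨_, h | h⟩
      · exact absurd h id
      · exact h
    · rintro ⟨rfl, rfl⟩; exact ⟨by simp, Or.inr ⟨rfl, rfl⟩⟩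
  · constructor
    · rintro ⟨hne, ⟨rfl, h2, h3, h4⟩ | ⟨rfl, h2, h3, h4⟩⟩
      · cases h2; exact ⟨rfl, rfl, by simp [h3, h4]⟩
      · cases h2; exact ⟨rfl, rfl, by simp [h3, h4]⟩
    · rintro ⟨rfl, rfl, hb⟩
      cases b <;> cases c <;> simp_all [Prod.ext_iff]

end LapB

namespace LapB
variable {t : ℕ}

lemma adj_to_lf {u : V t} {i : Fin 4} {p : Fin t} :
    (B t).Adj u (lf i p) ↔ u = md i p := by
  rw [adj_iff]
  rcases u with j | ⟨j, q, c⟩ <;> simp [Rel', lf, md, Sigma.mk.inj_iff, Prod.ext_iff, and_comm]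
  all_goals aesop

lemma adj_to_md {u : V t} {i : Fin 4} {p : Fin t} :
    (B t).Adj u (md i p) ↔ u = co t i ∨ u = lf i p := by
  rw [adj_iff]
  rcases u with j | ⟨j, q, c⟩ <;> simp [Rel', lf, md, co, Sigma.mk.inj_iff, Prod.ext_iff]
  all_goals aesop

lemma adj_to_co {u : V t} {i : Fin 4} :
    (B t).Adj u (co t i) ↔
      (∃ j : Fin 4, ((j : ℕ) = i + 1 ∨ (i : ℕ) = j + 1) ∧ u = co t j) ∨
      ∃ p : Fin t, u = md i p := by
  rw [adj_iff]
  rcases u with j | ⟨j, q, c⟩ <;> simp [Rel', md, co, Sigma.mk.inj_iff, Prod.ext_iff]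
  all_goals aesop

end LapB

namespace LapB
variable {t : ℕ}

lemma co_ne_md (i j : Fin 4) (p : Fin t) : co t i ≠ md j p := by simp [co, md]
lemma co_ne_lf (i j : Fin 4) (p : Fin t) : co t i ≠ lf j p := by simp [co, lf]
lemma md_ne_lf (i j : Fin 4) (p q : Fin t) : md i p ≠ lf j q := by simp [md, lf]
lemma co_inj {i j : Fin 4} : co t i = co t j ↔ i = j := by simp [co]
lemma md_inj {i j : Fin 4} {p q : Fin t} : md i p = md j q ↔ i = j ∧ p = q := by
  simp [md, Sigma.mk.inj_iff, Prod.ext_iff]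
lemma lf_inj {i j : Fin 4} {p q : Fin t} : lf i p = lf j q ↔ i = j ∧ p = q := by
  simp [lf, Sigma.mk.inj_iff, Prod.ext_iff]

lemma nbhd_lf (i : Fin 4) (p : Fin t) :
    (B t).neighborFinset (lf i p) = {md i p} := by
  ext u
  rw [mem_neighborFinset, (B t).adj_comm, adj_to_lf, mem_singleton]

lemma deg_lf (i : Fin 4) (p : Fin t) : (B t).degree (lf i p) = 1 := by
  rw [SimpleGraph.degree, nbhd_lf]; simp

lemma nbhd_md (i : Fin 4) (p : Fin t) :
    (B t).neighborFinset (md i p) = {co t i, lf i p} := by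
  ext u
  rw [mem_neighborFinset, (B t).adj_comm, adj_to_md]
  simp

lemma deg_md (i : Fin 4) (p : Fin t) : (B t).degree (md i p) = 2 := by
  rw [SimpleGraph.degree, nbhd_md, card_insert_of_notMem (by simp [co, lf])]
  simp

lemma nbhd_co (i : Fin 4) :
    (B t).neighborFinset (co t i) =
      ((univ.filter fun j : Fin 4 => (j : ℕ) = i + 1 ∨ (i : ℕ) = j + 1).image (co t)) ∪
        (univ.image fun p : Fin t => md i p) := by
  ext u
  rw [mem_neighborFinset, (B t).adj_comm, adj_to_co]
  simp only [mem_union, mem_image, mem_filter, mem_univ, true_and, co, md]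
  aesop

lemma deg_co (i : Fin 4) :
    (B t).degree (co t i) = t + (if i = 0 ∨ i = 3 then 1 else 2) := by
  rw [SimpleGraph.degree, nbhd_co, card_union_of_disjoint, card_image_of_injective,
    card_image_of_injective]
  · have : (univ.filter fun j : Fin 4 => (j : ℕ) = i + 1 ∨ (i : ℕ) = j + 1).card
        = if i = 0 ∨ i = 3 then 1 else 2 := by fin_cases i <;> decide
    rw [this]
    simp [add_comm]
  · intro p q h; exact ((md_inj.mp h).2)
  · intro p q h; exact co_inj.mp h
  · simp only [Finset.disjoint_left, mem_image]
    rintro u ⟨j, _, rfl⟩ ⟨p, _, h⟩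
    exact co_ne_md j i p h.symm

lemma prod_deg :
    (∏ v : V t, ((B t).degree v : ℚ)) =
      2 ^ (4 * t) * ((t : ℚ) + 1) ^ 2 * ((t : ℚ) + 2) ^ 2 := by
  rw [Fintype.prod_sum_type]
  have h1 : (∏ i : Fin 4, ((B t).degree (Sum.inl i : V t) : ℚ))
      = ((t : ℚ) + 1) ^ 2 * ((t : ℚ) + 2) ^ 2 := by
    have key : ∀ i : Fin 4, ((B t).degree (Sum.inl i : V t) : ℚ)
        = (t : ℚ) + (if i = 0 ∨ i = 3 then 1 else 2) := by
      intro i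
      rw [show (Sum.inl i : V t) = co t i from rfl, deg_co]
      push_cast
      split <;> norm_num
    rw [Fin.prod_univ_four, key 0, key 1, key 2, key 3,
      if_pos (by decide : (0 : Fin 4) = 0 ∨ (0 : Fin 4) = 3),
      if_neg (by decide : ¬((1 : Fin 4) = 0 ∨ (1 : Fin 4) = 3)),
      if_neg (by decide : ¬((2 : Fin 4) = 0 ∨ (2 : Fin 4) = 3)),
      if_pos (by decide : (3 : Fin 4) = 0 ∨ (3 : Fin 4) = 3)]
    ring
  have h2 : (∏ x : Σ _i : Fin 4, Fin t × Bool, ((B t).degree (Sum.inr x : V t) : ℚ))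
      = 2 ^ (4 * t) := by
    rw [← Finset.univ_sigma_univ, Finset.prod_sigma]
    have : ∀ i : Fin 4, (∏ y : Fin t × Bool, ((B t).degree (Sum.inr ⟨i, y⟩ : V t) : ℚ))
        = 2 ^ t := by
      intro i
      rw [Fintype.prod_prod_type]
      have : ∀ p : Fin t, (∏ b : Bool, ((B t).degree (Sum.inr ⟨i, (p, b)⟩ : V t) : ℚ)) = 2 := by
        intro p
        rw [Fintype.prod_bool]
        rw [show (Sum.inr ⟨i, (p, true)⟩ : V t) = lf i p from rfl,
          show (Sum.inr ⟨i, (p, false)⟩ : V t) = md i p from rfl, deg_lf, deg_md]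
        norm_num
      simp only [this, prod_const, card_univ, Fintype.card_fin]
    simp only [this, prod_const, card_univ, Fintype.card_fin]
    rw [← pow_mul, mul_comm]
  rw [h1, h2]; ring

end LapB

namespace LapB
variable {t : ℕ}

lemma lap_apply (u v : V t) :
    (B t).lapMatrix ℚ u v =
      if u = v then ((B t).degree u : ℚ) else if (B t).Adj u v then -1 else 0 := by
  rw [SimpleGraph.lapMatrix, Matrix.sub_apply, SimpleGraph.degMatrix, SimpleGraph.adjMatrix_apply,
    Matrix.diagonal_apply]
  by_cases h : u = v
  · subst h; simp
  · rw [if_neg h]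
    split_ifs <;> simp

section Classify

variable {σ : Equiv.Perm (V t)} (hs : ∀ v, σ v = v ∨ (B t).Adj (σ v) v)
include hs

lemma S1 (i : Fin 4) (p : Fin t) : σ (lf i p) = lf i p ∨ σ (lf i p) = md i p := by
  rcases hs (lf i p) with h | h
  · exact Or.inl h
  · exact Or.inr (adj_to_lf.mp h)

lemma S2 (i : Fin 4) (p : Fin t) :
    σ (md i p) = md i p ∨ σ (md i p) = co t i ∨ σ (md i p) = lf i p := by
  rcases hs (md i p) with h | h
  · exact Or.inl h
  · exact Or.inr (adj_to_md.mp h)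

lemma S3 (i : Fin 4) :
    σ (co t i) = co t i ∨
      (∃ j : Fin 4, ((j : ℕ) = i + 1 ∨ (i : ℕ) = j + 1) ∧ σ (co t i) = co t j) ∨
      ∃ p : Fin t, σ (co t i) = md i p := by
  rcases hs (co t i) with h | h
  · exact Or.inl h
  · rcases adj_to_co.mp h with ⟨j, hj, h⟩ | ⟨p, h⟩
    · exact Or.inr (Or.inl ⟨j, hj, h⟩)
    · exact Or.inr (Or.inr ⟨p, h⟩)

lemma pre (u : V t) : σ (σ.symm u) = u ∧ (σ.symm u = u ∨ (B t).Adj u (σ.symm u)) := by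
  refine ⟨σ.apply_symm_apply u, ?_⟩
  rcases hs (σ.symm u) with h | h
  · exact Or.inl (by rw [← h, σ.apply_symm_apply])
  · right; rwa [σ.apply_symm_apply] at h

lemma P1 (i : Fin 4) (p : Fin t) :
    ∃ v, σ v = lf i p ∧ (v = lf i p ∨ v = md i p) := by
  obtain ⟨h1, h2⟩ := pre hs (lf i p)
  refine ⟨σ.symm (lf i p), h1, ?_⟩
  rcases h2 with h | h
  · exact Or.inl h
  · exact Or.inr (adj_to_lf.mp ((B t).adj_comm .. |>.mp h))

lemma P2 (i : Fin 4) (p : Fin t) :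
    ∃ v, σ v = md i p ∧ (v = md i p ∨ v = co t i ∨ v = lf i p) := by
  obtain ⟨h1, h2⟩ := pre hs (md i p)
  refine ⟨σ.symm (md i p), h1, ?_⟩
  rcases h2 with h | h
  · exact Or.inl h
  · exact Or.inr (adj_to_md.mp ((B t).adj_comm .. |>.mp h))

lemma P3 (i : Fin 4) :
    ∃ v, σ v = co t i ∧ (v = co t i ∨
      (∃ j : Fin 4, ((j : ℕ) = i + 1 ∨ (i : ℕ) = j + 1) ∧ v = co t j) ∨
      ∃ p : Fin t, v = md i p) := by
  obtain ⟨h1, h2⟩ := pre hs (co t i)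
  refine ⟨σ.symm (co t i), h1, ?_⟩
  rcases h2 with h | h
  · exact Or.inl h
  · exact Or.inr (adj_to_co.mp ((B t).adj_comm .. |>.mp h))

lemma I1 {i : Fin 4} {p : Fin t} (h : σ (lf i p) = md i p) : σ (md i p) = lf i p := by
  rcases S2 hs i p with h2 | h2 | h2
  · exact absurd (σ.injective (h.trans h2.symm)) (md_ne_lf i i p p).symm
  · obtain ⟨v, hv, hv2⟩ := P1 hs i p
    rcases hv2 with rfl | rfl
    · exact absurd (hv.symm.trans h) (Ne.symm (md_ne_lf i i p p))
    · exact hv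
  · exact h2

lemma I2 {i : Fin 4} {p : Fin t} (h : σ (md i p) = lf i p) : σ (lf i p) = md i p := by
  rcases S1 hs i p with h1 | h1
  · exact absurd (σ.injective (h.trans h1.symm)) (md_ne_lf i i p p)
  · exact h1

lemma I3 {i : Fin 4} {p : Fin t} (h : σ (md i p) = co t i) : σ (co t i) = md i p := by
  obtain ⟨v, hv, hv2⟩ := P2 hs i p
  rcases hv2 with rfl | rfl | rfl
  · exact absurd (hv.symm.trans h) (fun hh => co_ne_md i i p hh.symm)
  · exact hv
  · have := I1 hs hv
    rw [this] at h
    exact absurd h (fun hh => co_ne_lf i i p hh.symm)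

lemma I4 {i : Fin 4} {p : Fin t} (h : σ (co t i) = md i p) : σ (md i p) = co t i := by
  rcases S2 hs i p with h2 | h2 | h2
  · exact absurd (σ.injective (h.trans h2.symm)) (co_ne_md i i p)
  · exact h2
  · have := I2 hs h2
    exact absurd (σ.injective (h.trans this.symm)) (fun hh => co_ne_lf i i p (hh ▸ rfl) )

end Classify
end LapB

namespace LapB
variable {t : ℕ}
section Core

variable {σ : Equiv.Perm (V t)} (hs : ∀ v, σ v = v ∨ (B t).Adj (σ v) v)
include hs

lemma co_ne_co {i j : Fin 4} (h : i ≠ j) : co t i ≠ co t j := fun hh => h (co_inj.mp hh)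

lemma Ca (h : σ (co t 0) = co t 1) : σ (co t 1) = co t 0 := by
  obtain ⟨v, hv, H⟩ := P3 hs 0
  rcases H with rfl | ⟨j, hj, rfl⟩ | ⟨p, rfl⟩
  · exact absurd (h.symm.trans hv) (co_ne_co hs (by decide))
  · have hj' : j = 1 := by fin_cases j <;> simp_all <;> omega
    subst hj'; exact hv
  · exact absurd (h.symm.trans (I3 hs hv)) (fun hh => co_ne_md 1 0 p hh)

lemma Cb (h : σ (co t 1) = co t 0) : σ (co t 0) = co t 1 := by
  rcases S3 hs 0 with h0 | ⟨j, hj, h0⟩ | ⟨p, h0⟩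
  · exact absurd (σ.injective (h.trans h0.symm)) (by exact fun hh => (co_ne_co hs (show (1:Fin 4) ≠ 0 by decide)) hh)
  · have hj' : j = 1 := by fin_cases j <;> simp_all <;> omega
    subst hj'; exact h0
  · exact absurd (σ.injective (h.trans (I4 hs h0).symm)) (fun hh => co_ne_md 1 0 p hh)

lemma Cc (h : σ (co t 1) = co t 2) : σ (co t 2) = co t 1 := by
  obtain ⟨v, hv, H⟩ := P3 hs 1
  rcases H with rfl | ⟨j, hj, rfl⟩ | ⟨p, rfl⟩
  · exact absurd (h.symm.trans hv) (co_ne_co hs (by decide))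
  · have hj' : j = 2 ∨ j = 0 := by fin_cases j <;> simp_all <;> omega
    rcases hj' with rfl | rfl
    · exact hv
    · exact absurd (h.symm.trans (Ca hs hv)) (co_ne_co hs (by decide))
  · exact absurd (h.symm.trans (I3 hs hv)) (fun hh => co_ne_md 2 1 p hh)

lemma Cd (h : σ (co t 2) = co t 1) : σ (co t 1) = co t 2 := by
  rcases S3 hs 1 with h0 | ⟨j, hj, h0⟩ | ⟨p, h0⟩
  · exact absurd (σ.injective (h.trans h0.symm)) (fun hh => (co_ne_co hs (show (2:Fin 4) ≠ 1 by decide)) hh)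
  · have hj' : j = 2 ∨ j = 0 := by fin_cases j <;> simp_all <;> omega
    rcases hj' with rfl | rfl
    · exact h0
    · exact absurd (σ.injective (h.trans (Cb hs h0).symm)) (fun hh => (co_ne_co hs (show (2:Fin 4) ≠ 0 by decide)) hh)
  · exact absurd (σ.injective (h.trans (I4 hs h0).symm)) (fun hh => co_ne_md 2 1 p hh)

lemma Ce (h : σ (co t 2) = co t 3) : σ (co t 3) = co t 2 := by
  rcases S3 hs 3 with h0 | ⟨j, hj, h0⟩ | ⟨p, h0⟩
  · exact absurd (σ.injective (h.trans h0.symm)) (fun hh => (co_ne_co hs (show (2:Fin 4) ≠ 3 by decide)) hh)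
  · have hj' : j = 2 := by fin_cases j <;> simp_all <;> omega
    subst hj'; exact h0
  · exact absurd (σ.injective (h.trans (I4 hs h0).symm)) (fun hh => co_ne_md 2 3 p hh)

lemma Cf (h : σ (co t 3) = co t 2) : σ (co t 2) = co t 3 := by
  rcases S3 hs 2 with h0 | ⟨j, hj, h0⟩ | ⟨p, h0⟩
  · exact absurd (σ.injective (h.trans h0.symm)) (fun hh => (co_ne_co hs (show (3:Fin 4) ≠ 2 by decide)) hh)
  · have hj' : j = 3 ∨ j = 1 := by fin_cases j <;> simp_all <;> omega
    rcases hj' with rfl | rfl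
    · exact h0
    · exact absurd (σ.injective (h.trans (Cd hs h0).symm)) (fun hh => (co_ne_co hs (show (3:Fin 4) ≠ 1 by decide)) hh)
  · exact absurd (σ.injective (h.trans (I4 hs h0).symm)) (fun hh => co_ne_md 3 2 p hh)

end Core
end LapB

namespace LapB
variable {t : ℕ}

/-- raw configuration data -/
abbrev X (t : ℕ) := (Bool × Bool × Bool) × (Fin 4 → Option (Fin t)) × (Fin 4 → Fin t → Bool)

def pairc (pm : Bool × Bool × Bool) (i : Fin 4) : Option (Fin 4) :=
  if i = 0 then (if pm.1 then some 1 else none)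
  else if i = 1 then (if pm.1 then some 0 else if pm.2.1 then some 2 else none)
  else if i = 2 then (if pm.2.1 then some 1 else if pm.2.2 then some 3 else none)
  else (if pm.2.2 then some 2 else none)

def pmOK (pm : Bool × Bool × Bool) : Prop :=
  ¬(pm.1 = true ∧ pm.2.1 = true) ∧ ¬(pm.2.1 = true ∧ pm.2.2 = true)

instance : DecidablePred (pmOK) := fun pm => by unfold pmOK; infer_instance

def P (x : X t) : Prop :=
  pmOK x.1 ∧ (∀ i : Fin 4, (pairc x.1 i).isSome → x.2.1 i = none) ∧
    (∀ i p, x.2.1 i = some p → x.2.2 i p = false)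

instance : DecidablePred (P (t := t)) := fun x => by unfold P; infer_instance

def f (x : X t) : V t → V t
  | Sum.inl i =>
      match pairc x.1 i with
      | some j => co t j
      | none =>
          match x.2.1 i with
          | some p => md i p
          | none => co t i
  | Sum.inr ⟨i, (p, false)⟩ =>
      if x.2.1 i = some p then co t i else if x.2.2 i p then lf i p else md i p
  | Sum.inr ⟨i, (p, true)⟩ => if x.2.2 i p then md i p else lf i p

lemma pairc_pair {pm : Bool × Bool × Bool} (h : pmOK pm) {i j : Fin 4}
    (hij : pairc pm i = some j) : pairc pm j = some i := by
  revert hij h; revert i j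
  rcases pm with ⟨a, b, c⟩
  cases a <;> cases b <;> cases c <;> decide

lemma f_co (x : X t) (i : Fin 4) : f x (co t i) =
    (match pairc x.1 i with
     | some j => co t j
     | none => match x.2.1 i with
               | some p => md i p
               | none => co t i) := rfl

lemma f_md (x : X t) (i : Fin 4) (p : Fin t) :
    f x (md i p) = if x.2.1 i = some p then co t i else if x.2.2 i p then lf i p else md i p :=
  rfl

lemma f_lf (x : X t) (i : Fin 4) (p : Fin t) :
    f x (lf i p) = if x.2.2 i p then md i p else lf i p := rfl

lemma f_invol {x : X t} (hx : P x) : Function.Involutive (f x) := by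
  obtain ⟨h1, h2, h3⟩ := hx
  intro v
  rcases v with i | ⟨i, p, b⟩
  · show f x (f x (co t i)) = co t i
    rcases hp : pairc x.1 i with _ | j
    · rcases hc : x.2.1 i with _ | p
      · have e1 : f x (co t i) = co t i := by rw [f_co, hp, hc]
        rw [e1, e1]
      · have e1 : f x (co t i) = md i p := by rw [f_co, hp, hc]
        have e2 : f x (md i p) = co t i := by rw [f_md, if_pos hc]
        rw [e1, e2]
    · have hpj := pairc_pair h1 hp
      have e1 : f x (co t i) = co t j := by rw [f_co, hp]
      have e2 : f x (co t j) = co t i := by rw [f_co, hpj]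
      rw [e1, e2]
  · cases b
    · show f x (f x (md i p)) = md i p
      by_cases hc : x.2.1 i = some p
      · have hnp : pairc x.1 i = none := by
          rcases hp : pairc x.1 i with _ | j
          · rfl
          · exact absurd hc (by rw [h2 i (by rw [hp]; rfl)]; simp)
        have e1 : f x (md i p) = co t i := by rw [f_md, if_pos hc]
        have e2 : f x (co t i) = md i p := by rw [f_co, hnp, hc]
        rw [e1, e2]
      · by_cases hw : x.2.2 i p
        · have e1 : f x (md i p) = lf i p := by rw [f_md, if_neg hc, if_pos hw]
          have e2 : f x (lf i p) = md i p := by rw [f_lf, if_pos hw]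
          rw [e1, e2]
        · have e1 : f x (md i p) = md i p := by rw [f_md, if_neg hc, if_neg hw]
          rw [e1, e1]
    · show f x (f x (lf i p)) = lf i p
      by_cases hw : x.2.2 i p
      · have hc : x.2.1 i ≠ some p := fun hc => by simp [h3 i p hc] at hw
        have e1 : f x (lf i p) = md i p := by rw [f_lf, if_pos hw]
        have e2 : f x (md i p) = lf i p := by rw [f_md, if_neg hc, if_pos hw]
        rw [e1, e2]
      · have e1 : f x (lf i p) = lf i p := by rw [f_lf, if_neg hw]
        rw [e1, e1]

def Phi (x : {x : X t // P x}) : Equiv.Perm (V t) := (f_invol x.2).toPerm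

lemma Phi_apply (x : {x : X t // P x}) (v : V t) : Phi x v = f x.1 v := rfl

end LapB

namespace LapB
variable {t : ℕ}

lemma pairc_0 (pm : Bool × Bool × Bool) : pairc pm 0 = (if pm.1 then some 1 else none) := rfl
lemma pairc_1 (pm : Bool × Bool × Bool) :
    pairc pm 1 = (if pm.1 then some 0 else if pm.2.1 then some 2 else none) := rfl
lemma pairc_2 (pm : Bool × Bool × Bool) :
    pairc pm 2 = (if pm.2.1 then some 1 else if pm.2.2 then some 3 else none) := rfl
lemma pairc_3 (pm : Bool × Bool × Bool) : pairc pm 3 = (if pm.2.2 then some 2 else none) := rfl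

lemma cm_of_f {x : X t} {i : Fin 4} {p : Fin t} (h : f x (md i p) = co t i) :
    x.2.1 i = some p := by
  rw [f_md] at h
  split_ifs at h with h1 h2
  · exact h1
  · exact absurd h (fun hh => co_ne_lf i i p hh.symm)
  · exact absurd h (fun hh => co_ne_md i i p hh.symm)

lemma fco0 (x : X t) : f x (co t 0) = co t 1 ↔ x.1.1 = true := by
  rw [f_co, pairc_0]
  rcases hb : x.1.1
  · rcases hc : x.2.1 0 with _ | p <;> simp [hb, hc, co, md, Fin.ext_iff]
  · simp [hb]

lemma fco2 (x : X t) : f x (co t 2) = co t 1 ↔ x.1.2.1 = true := by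
  rw [f_co, pairc_2]
  rcases hb : x.1.2.1
  · rcases hb2 : x.1.2.2
    · rcases hc : x.2.1 2 with _ | p <;> simp [hb, hb2, hc, co, md, Fin.ext_iff]
    · simp [hb, hb2, co, Fin.ext_iff]
  · simp [hb]

lemma fco3 (x : X t) : f x (co t 3) = co t 2 ↔ x.1.2.2 = true := by
  rw [f_co, pairc_3]
  rcases hb : x.1.2.2
  · rcases hc : x.2.1 3 with _ | p <;> simp [hb, hc, co, md, Fin.ext_iff] <;> decide
  · simp [hb]

lemma Phi_inj : Function.Injective (Phi (t := t)) := by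
  rintro ⟨x, hx⟩ ⟨y, hy⟩ h
  have hf : ∀ v, f x v = f y v := fun v => by
    rw [← Phi_apply ⟨x, hx⟩, ← Phi_apply ⟨y, hy⟩, h]
  have hsw : x.2.2 = y.2.2 := by
    funext i p
    have hfl := hf (lf i p)
    rw [f_lf, f_lf] at hfl
    rcases hx1 : x.2.2 i p <;> rcases hy1 : y.2.2 i p <;> rw [hx1, hy1] at hfl <;> simp at hfl ⊢
    · exact absurd hfl.symm (md_ne_lf i i p p)
    · exact absurd hfl (md_ne_lf i i p p)
  have hcm : x.2.1 = y.2.1 := by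
    funext i
    rcases hx1 : x.2.1 i with _ | p <;> rcases hy1 : y.2.1 i with _ | q
    · rfl
    · have : f y (md i q) = co t i := by rw [f_md, if_pos hy1]
      rw [← hf] at this
      rw [cm_of_f this] at hx1; exact absurd hx1 (by simp)
    · have : f x (md i p) = co t i := by rw [f_md, if_pos hx1]
      rw [hf] at this
      rw [cm_of_f this] at hy1; exact absurd hy1 (by simp)
    · have : f x (md i p) = co t i := by rw [f_md, if_pos hx1]
      rw [hf] at this
      exact (hy1.symm.trans (cm_of_f this)).symm
  have hpm : x.1 = y.1 := by
    have e0 : x.1.1 = y.1.1 := by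
      rcases h0 : x.1.1 <;> rcases h1 : y.1.1 <;> try rfl
      · have := (fco0 x).mp (by rw [hf _]; exact (fco0 y).mpr h1)
        rw [this] at h0; exact absurd h0 (by simp)
      · have := (fco0 y).mp (by rw [← hf _]; exact (fco0 x).mpr h0)
        rw [this] at h1; exact absurd h1 (by simp)
    have e1 : x.1.2.1 = y.1.2.1 := by
      rcases h0 : x.1.2.1 <;> rcases h1 : y.1.2.1 <;> try rfl
      · have := (fco2 x).mp (by rw [hf _]; exact (fco2 y).mpr h1)
        rw [this] at h0; exact absurd h0 (by simp)
      · have := (fco2 y).mp (by rw [← hf _]; exact (fco2 x).mpr h0)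
        rw [this] at h1; exact absurd h1 (by simp)
    have e2 : x.1.2.2 = y.1.2.2 := by
      rcases h0 : x.1.2.2 <;> rcases h1 : y.1.2.2 <;> try rfl
      · have := (fco3 x).mp (by rw [hf _]; exact (fco3 y).mpr h1)
        rw [this] at h0; exact absurd h0 (by simp)
      · have := (fco3 y).mp (by rw [← hf _]; exact (fco3 x).mpr h0)
        rw [this] at h1; exact absurd h1 (by simp)
    exact Prod.ext e0 (Prod.ext e1 e2)
  exact Subtype.ext (Prod.ext hpm (Prod.ext hcm hsw))

end LapB

namespace LapB
variable {t : ℕ}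

lemma fin4_cases : ∀ i : Fin 4, i = 0 ∨ i = 1 ∨ i = 2 ∨ i = 3 := by decide

def cmx : V t → Option (Fin t)
  | Sum.inr ⟨_, (p, false)⟩ => some p
  | _ => none

section Surj
variable {σ : Equiv.Perm (V t)} (hs : ∀ v, σ v = v ∨ (B t).Adj (σ v) v)
include hs

lemma cm_some {i : Fin 4} {p : Fin t} :
    cmx (σ (co t i)) = some p ↔ σ (co t i) = md i p := by
  constructor
  · intro h
    rcases S3 hs i with h0 | ⟨j, _, h0⟩ | ⟨q, h0⟩ <;> rw [h0] at h ⊢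
    · exact absurd h (by simp [co, cmx])
    · exact absurd h (by simp [co, cmx])
    · simp only [md, cmx, Option.some.injEq] at h
      rw [md_inj]; exact ⟨rfl, h⟩
  · intro h; rw [h]; rfl

lemma surj_support (hσ : ∏ v : V t, (B t).lapMatrix ℚ (σ v) v ≠ 0) :
    ∃ c : {x : X t // P x}, Phi c = σ := by
  classical
  set pm : Bool × Bool × Bool :=
    (decide (σ (co t 0) = co t 1), decide (σ (co t 1) = co t 2), decide (σ (co t 2) = co t 3))
    with hpm
  set cm : Fin 4 → Option (Fin t) := fun i => cmx (σ (co t i)) with hcm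
  set sw : Fin 4 → Fin t → Bool := fun i p => decide (σ (lf i p) = md i p) with hsw
  set x : X t := (pm, cm, sw) with hxd
  have hP : P x := by
    refine ⟨⟨?_, ?_⟩, ?_, ?_⟩
    · rintro ⟨h1, h2⟩
      simp only [hxd, hpm, decide_eq_true_eq] at h1 h2
      exact co_ne_co hs (show (0:Fin 4) ≠ 2 by decide) ((Ca hs h1).symm.trans h2)
    · rintro ⟨h1, h2⟩
      simp only [hxd, hpm, decide_eq_true_eq] at h1 h2
      exact co_ne_co hs (show (1:Fin 4) ≠ 3 by decide) ((Cc hs h1).symm.trans h2)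
    · intro i hi
      rcases fin4_cases i with rfl | rfl | rfl | rfl
      · rw [pairc_0] at hi
        rcases h1 : pm.1
        · rw [h1] at hi; simp at hi
        · have := of_decide_eq_true h1
          show cmx (σ (co t 0)) = none
          rw [this]; rfl
      · rw [pairc_1] at hi
        rcases h1 : pm.1
        · rcases h2 : pm.2.1
          · rw [h1, h2] at hi; simp at hi
          · have := of_decide_eq_true h2
            show cmx (σ (co t 1)) = none
            rw [this]; rfl
        · have := Ca hs (of_decide_eq_true h1)
          show cmx (σ (co t 1)) = none
          rw [this]; rfl
      · rw [pairc_2] at hi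
        rcases h1 : pm.2.1
        · rcases h2 : pm.2.2
          · rw [h1, h2] at hi; simp at hi
          · have := of_decide_eq_true h2
            show cmx (σ (co t 2)) = none
            rw [this]; rfl
        · have := Cc hs (of_decide_eq_true h1)
          show cmx (σ (co t 2)) = none
          rw [this]; rfl
      · rw [pairc_3] at hi
        rcases h1 : pm.2.2
        · rw [h1] at hi; simp at hi
        · have := Ce hs (of_decide_eq_true h1)
          show cmx (σ (co t 3)) = none
          rw [this]; rfl
    · intro i p hc
      have h1 : σ (co t i) = md i p := (cm_some hs).mp hc
      have h2 := I4 hs h1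
      show decide (σ (lf i p) = md i p) = false
      rw [decide_eq_false_iff_not]
      intro h3
      have := I1 hs h3
      rw [this] at h2
      exact co_ne_lf i i p h2.symm
  refine ⟨⟨x, hP⟩, ?_⟩
  apply Equiv.ext
  intro v
  rw [Phi_apply]
  rcases v with i | ⟨i, p, b⟩
  · show f x (co t i) = σ (co t i)
    rcases fin4_cases i with rfl | rfl | rfl | rfl
    · rw [f_co, pairc_0]
      by_cases h01 : σ (co t 0) = co t 1
      · rw [if_pos (by simp [hxd, hpm, h01])]
        exact h01.symm
      · rw [if_neg (by simp [hxd, hpm, h01])]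
        rcases S3 hs 0 with h0 | ⟨j, hj, h0⟩ | ⟨p, h0⟩
        · show (match cmx (σ (co t 0)) with | some p => md 0 p | none => co t 0) = _
          rw [h0]; rfl
        · have : j = 1 := by fin_cases j <;> simp_all <;> omega
          rw [this] at h0; exact absurd h0 h01
        · show (match cmx (σ (co t 0)) with | some p => md 0 p | none => co t 0) = _
          rw [h0]; rfl
    · rw [f_co, pairc_1]
      by_cases h01 : σ (co t 0) = co t 1
      · rw [if_pos (by simp [hxd, hpm, h01])]
        exact (Ca hs h01).symm
      · rw [if_neg (by simp [hxd, hpm, h01])]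
        by_cases h12 : σ (co t 1) = co t 2
        · rw [if_pos (by simp [hxd, hpm, h12])]
          exact h12.symm
        · rw [if_neg (by simp [hxd, hpm, h12])]
          rcases S3 hs 1 with h0 | ⟨j, hj, h0⟩ | ⟨p, h0⟩
          · show (match cmx (σ (co t 1)) with | some p => md 1 p | none => co t 1) = _
            rw [h0]; rfl
          · have : j = 2 ∨ j = 0 := by fin_cases j <;> simp_all <;> omega
            rcases this with rfl | rfl
            · exact absurd h0 h12
            · exact absurd (Cb hs h0) h01
          · show (match cmx (σ (co t 1)) with | some p => md 1 p | none => co t 1) = _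
            rw [h0]; rfl
    · rw [f_co, pairc_2]
      by_cases h12 : σ (co t 1) = co t 2
      · rw [if_pos (by simp [hxd, hpm, h12])]
        exact (Cc hs h12).symm
      · rw [if_neg (by simp [hxd, hpm, h12])]
        by_cases h23 : σ (co t 2) = co t 3
        · rw [if_pos (by simp [hxd, hpm, h23])]
          exact h23.symm
        · rw [if_neg (by simp [hxd, hpm, h23])]
          rcases S3 hs 2 with h0 | ⟨j, hj, h0⟩ | ⟨p, h0⟩
          · show (match cmx (σ (co t 2)) with | some p => md 2 p | none => co t 2) = _
            rw [h0]; rfl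
          · have : j = 3 ∨ j = 1 := by fin_cases j <;> simp_all <;> omega
            rcases this with rfl | rfl
            · exact absurd h0 h23
            · exact absurd (Cd hs h0) h12
          · show (match cmx (σ (co t 2)) with | some p => md 2 p | none => co t 2) = _
            rw [h0]; rfl
    · rw [f_co, pairc_3]
      by_cases h23 : σ (co t 2) = co t 3
      · rw [if_pos (by simp [hxd, hpm, h23])]
        exact (Ce hs h23).symm
      · rw [if_neg (by simp [hxd, hpm, h23])]
        rcases S3 hs 3 with h0 | ⟨j, hj, h0⟩ | ⟨p, h0⟩
        · show (match cmx (σ (co t 3)) with | some p => md 3 p | none => co t 3) = _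
          rw [h0]; rfl
        · have : j = 2 := by fin_cases j <;> simp_all <;> omega
          rw [this] at h0
          exact absurd (Cf hs h0) h23
        · show (match cmx (σ (co t 3)) with | some p => md 3 p | none => co t 3) = _
          rw [h0]; rfl
  · cases b
    · show f x (md i p) = σ (md i p)
      rw [f_md]
      by_cases hc : cmx (σ (co t i)) = some p
      · rw [if_pos (by exact hc)]
        exact (I4 hs ((cm_some hs).mp hc)).symm
      · rw [if_neg (by exact hc)]
        rcases S2 hs i p with h0 | h0 | h0
        · have hlf : ¬ σ (lf i p) = md i p := fun h3 => by
            have := I1 hs h3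
            rw [this] at h0
            exact md_ne_lf i i p p h0.symm
          rw [if_neg (by simpa [hxd, hsw] using hlf)]
          exact h0.symm
        · exact absurd ((cm_some hs).mpr (I3 hs h0)) hc
        · have hlf := I2 hs h0
          rw [if_pos (by simpa [hxd, hsw] using hlf)]
          exact h0.symm
    · show f x (lf i p) = σ (lf i p)
      rw [f_lf]
      rcases S1 hs i p with h0 | h0
      · rw [if_neg (by simp [hxd, hsw, h0]; exact fun h => md_ne_lf i i p p h.symm)]
        exact h0.symm
      · rw [if_pos (by simpa [hxd, hsw] using h0)]
        exact h0.symm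

end Surj
end LapB

namespace LapB
variable {t : ℕ}

noncomputable def gcf (pm : Bool × Bool × Bool) (i : Fin 4) (o : Option (Fin t)) : ℚ :=
  if (pairc pm i).isSome then (if o = none then -1 else 0)
  else (match o with | some _ => -1 | none => ((B t).degree (co t i) : ℚ))

def gpf (o : Option (Fin t)) (p : Fin t) (b : Bool) : ℚ :=
  if o = some p then (if b then 0 else -1) else (if b then 1 else 2)

noncomputable def g (pm : Bool × Bool × Bool) (i : Fin 4) (o : Option (Fin t)) (s : Fin t → Bool) : ℚ :=
  gcf pm i o * ∏ p, gpf o p (s p)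

noncomputable def Wn (x : X t) : ℚ :=
  (if pmOK x.1 then 1 else 0) * ∏ i, g x.1 i (x.2.1 i) (x.2.2 i)

lemma pairc_adj {pm : Bool × Bool × Bool} {i j : Fin 4} (h : pairc pm i = some j) :
    ((j : ℕ) = i + 1 ∨ (i : ℕ) = j + 1) ∧ i ≠ j := by
  revert h; revert i j
  rcases pm with ⟨a, b, c⟩
  cases a <;> cases b <;> cases c <;> decide

lemma lap_co_co {i j : Fin 4} (h : (j : ℕ) = i + 1 ∨ (i : ℕ) = j + 1) :
    (B t).lapMatrix ℚ (co t j) (co t i) = -1 := by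
  rw [lap_apply, if_neg, if_pos]
  · rw [adj_iff]; exact Or.symm h
  · intro hh
    have := co_inj.mp hh
    subst this
    omega

lemma lap_md_co (i : Fin 4) (p : Fin t) :
    (B t).lapMatrix ℚ (md i p) (co t i) = -1 := by
  rw [lap_apply, if_neg (fun h => co_ne_md i i p h.symm), if_pos (adj_to_co.mpr (Or.inr ⟨p, rfl⟩))]

lemma lap_co_md (i : Fin 4) (p : Fin t) :
    (B t).lapMatrix ℚ (co t i) (md i p) = -1 := by
  rw [lap_apply, if_neg (co_ne_md i i p), if_pos (adj_to_md.mpr (Or.inl rfl))]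

lemma lap_lf_md (i : Fin 4) (p : Fin t) :
    (B t).lapMatrix ℚ (lf i p) (md i p) = -1 := by
  rw [lap_apply, if_neg (fun h => md_ne_lf i i p p h.symm), if_pos (adj_to_md.mpr (Or.inr rfl))]

lemma lap_md_lf (i : Fin 4) (p : Fin t) :
    (B t).lapMatrix ℚ (md i p) (lf i p) = -1 := by
  rw [lap_apply, if_neg (md_ne_lf i i p p), if_pos (adj_to_lf.mpr rfl)]

lemma lap_diag (v : V t) : (B t).lapMatrix ℚ v v = ((B t).degree v : ℚ) := by
  rw [lap_apply, if_pos rfl]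

/-- pointwise description of the contribution of a valid configuration -/
lemma W_eq_Wn (x : X t) :
    (if P x then ∏ v : V t, (B t).lapMatrix ℚ (f x v) v else 0) = Wn x := by
  by_cases hx : P x
  · rw [if_pos hx]
    obtain ⟨h1, h2, h3⟩ := hx
    rw [Wn, if_pos h1, one_mul]
    rw [Fintype.prod_sum_type]
    rw [← Finset.univ_sigma_univ, Finset.prod_sigma]
    have hcore : ∀ i : Fin 4,
        (B t).lapMatrix ℚ (f x (Sum.inl i)) (Sum.inl i) = gcf x.1 i (x.2.1 i) := by
      intro i
      rcases hp : pairc x.1 i with _ | j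
      · rcases hc : x.2.1 i with _ | p
        · have : f x (co t i) = co t i := by rw [f_co, hp, hc]
          rw [show (Sum.inl i : V t) = co t i from rfl, this, lap_diag]
          simp [gcf, hp, hc]
        · have : f x (co t i) = md i p := by rw [f_co, hp, hc]
          rw [show (Sum.inl i : V t) = co t i from rfl, this, lap_md_co]
          simp [gcf, hp, hc]
      · have : f x (co t i) = co t j := by rw [f_co, hp]
        have hcn := h2 i (by rw [hp]; rfl)
        rw [show (Sum.inl i : V t) = co t i from rfl, this,
          lap_co_co (pairc_adj hp).1]
        simp [gcf, hp, hcn]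
    have hpend : ∀ i : Fin 4,
        (∏ y : Fin t × Bool, (B t).lapMatrix ℚ (f x (Sum.inr ⟨i, y⟩)) (Sum.inr ⟨i, y⟩))
          = ∏ p : Fin t, gpf (x.2.1 i) p (x.2.2 i p) := by
      intro i
      rw [Fintype.prod_prod_type]
      refine Finset.prod_congr rfl fun p _ => ?_
      rw [Fintype.prod_bool]
      by_cases hc : x.2.1 i = some p
      · have hw : x.2.2 i p = false := h3 i p hc
        have e1 : f x (md i p) = co t i := by rw [f_md, if_pos hc]
        have e2 : f x (lf i p) = lf i p := by rw [f_lf, hw]; simp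
        rw [show (Sum.inr ⟨i, (p, true)⟩ : V t) = lf i p from rfl,
          show (Sum.inr ⟨i, (p, false)⟩ : V t) = md i p from rfl, e1, e2, lap_diag, deg_lf,
          lap_co_md]
        simp [gpf, hc, hw]
      · by_cases hw : x.2.2 i p
        · have e1 : f x (md i p) = lf i p := by rw [f_md, if_neg hc, if_pos hw]
          have e2 : f x (lf i p) = md i p := by rw [f_lf, if_pos hw]
          rw [show (Sum.inr ⟨i, (p, true)⟩ : V t) = lf i p from rfl,
            show (Sum.inr ⟨i, (p, false)⟩ : V t) = md i p from rfl, e1, e2, lap_md_lf,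
            lap_lf_md]
          simp [gpf, hc, hw]
        · have e1 : f x (md i p) = md i p := by rw [f_md, if_neg hc, if_neg hw]; 
          have e2 : f x (lf i p) = lf i p := by rw [f_lf]; simp [hw]
          rw [show (Sum.inr ⟨i, (p, true)⟩ : V t) = lf i p from rfl,
            show (Sum.inr ⟨i, (p, false)⟩ : V t) = md i p from rfl, e1, e2, lap_diag, lap_diag,
            deg_lf, deg_md]
          simp [gpf, hc, hw]
    rw [Finset.prod_congr rfl (fun i _ => hpend i), ← Finset.prod_mul_distrib]
    refine Finset.prod_congr rfl fun i _ => ?_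
    rw [hcore i, g]
  · rw [if_neg hx, Wn]
    by_cases h1 : pmOK x.1
    · rw [if_pos h1, one_mul]
      by_cases h2 : ∀ i : Fin 4, (pairc x.1 i).isSome → x.2.1 i = none
      · have h3 : ¬ (∀ i p, x.2.1 i = some p → x.2.2 i p = false) := by
          intro h3; exact hx ⟨h1, h2, h3⟩
        push_neg at h3
        obtain ⟨i, p, hc, hw⟩ := h3
        have hw' : x.2.2 i p = true := by simpa using hw
        refine (Finset.prod_eq_zero (Finset.mem_univ i) ?_).symm
        rw [g]
        have : gpf (x.2.1 i) p (x.2.2 i p) = 0 := by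
          simp [gpf, hc, hw']
        rw [Finset.prod_eq_zero (Finset.mem_univ p) this, mul_zero]
      · push_neg at h2
        obtain ⟨i, hp, hc⟩ := h2
        refine (Finset.prod_eq_zero (Finset.mem_univ i) ?_).symm
        rw [g]
        have : gcf x.1 i (x.2.1 i) = 0 := by
          rw [gcf.eq_def, if_pos hp, if_neg hc]
        rw [this, zero_mul]
    · rw [if_neg h1, zero_mul]

end LapB

namespace LapB
variable {t : ℕ}

lemma per_eq_sum_Wn :
    ((B t).lapMatrix ℚ).permanent = ∑ x : X t, Wn x := by
  classical
  rw [Matrix.permanent]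
  have hvanish : ∀ σ : Equiv.Perm (V t), σ ∉ Finset.univ.image (Phi (t := t)) →
      ∏ v : V t, (B t).lapMatrix ℚ (σ v) v = 0 := by
    intro σ hσ
    by_contra hne
    have hs : ∀ v, σ v = v ∨ (B t).Adj (σ v) v := by
      intro v
      by_contra hv
      push_neg at hv
      refine hne (Finset.prod_eq_zero (Finset.mem_univ v) ?_)
      rw [lap_apply, if_neg hv.1, if_neg hv.2]
    obtain ⟨c, hc⟩ := surj_support hs hne
    exact hσ (Finset.mem_image.mpr ⟨c, Finset.mem_univ c, hc⟩)
  rw [← Finset.sum_subset (Finset.subset_univ (Finset.univ.image (Phi (t := t))))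
    (fun σ _ hσ => hvanish σ hσ)]
  rw [Finset.sum_image (fun c _ c' _ h => Phi_inj h)]
  have : ∀ c : {x : X t // P x},
      (∏ v : V t, (B t).lapMatrix ℚ (Phi c v) v) = Wn c.1 := by
    intro c
    rw [← W_eq_Wn c.1, if_pos c.2]
    rfl
  rw [Finset.sum_congr rfl fun c _ => this c]
  rw [← Finset.sum_filter_of_ne (f := Wn) (fun x _ hx => by
    by_contra hPx
    exact hx (by rw [← W_eq_Wn x, if_neg hPx]))]
  exact (Finset.sum_subtype _ (by simp) Wn).symm

end LapB

namespace LapB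
variable {t : ℕ}

lemma sum_bool' (f : Bool → ℚ) : ∑ b : Bool, f b = f true + f false := by simp [add_comm]

lemma sum_s_none : (∑ s : Fin t → Bool, ∏ p, gpf (none : Option (Fin t)) p (s p))
    = (3 : ℚ) ^ t := by
  rw [← Fintype.prod_sum]
  have : ∀ p : Fin t, (∑ b : Bool, gpf (none : Option (Fin t)) p b) = 3 := by
    intro p
    rw [sum_bool']
    norm_num [gpf, (show (none : Option (Fin t)) ≠ some p by simp)]
  rw [Finset.prod_congr rfl fun p _ => this p, Finset.prod_const, Finset.card_univ,
    Fintype.card_fin]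

lemma sum_s_some (q : Fin t) :
    (∑ s : Fin t → Bool, ∏ p, gpf (some q) p (s p)) = -((3 : ℚ) ^ (t - 1)) := by
  rw [← Fintype.prod_sum]
  have key : ∀ p : Fin t, (∑ b : Bool, gpf (some q) p b) = if q = p then -1 else 3 := by
    intro p
    rw [sum_bool']
    by_cases h : q = p <;> norm_num [gpf, h]
  rw [Finset.prod_congr rfl fun p _ => key p,
    ← Finset.mul_prod_erase Finset.univ _ (Finset.mem_univ q), if_pos rfl]
  have : ∀ p ∈ Finset.univ.erase q, (if q = p then (-1 : ℚ) else 3) = 3 := by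
    intro p hp
    rw [if_neg (Ne.symm (Finset.ne_of_mem_erase hp))]
  rw [Finset.prod_congr rfl this, Finset.prod_const, Finset.card_erase_of_mem (Finset.mem_univ q),
    Finset.card_univ, Fintype.card_fin]
  ring

end LapB

namespace LapB
variable {t : ℕ}

lemma sum_os (pm : Bool × Bool × Bool) (i : Fin 4) :
    (∑ o : Option (Fin t), ∑ s : Fin t → Bool, g pm i o s)
      = if (pairc pm i).isSome then -((3 : ℚ) ^ t)
        else ((B t).degree (co t i) : ℚ) * 3 ^ t + t * 3 ^ (t - 1) := by
  have hg : ∀ o : Option (Fin t), (∑ s : Fin t → Bool, g pm i o s)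
      = gcf pm i o * (∑ s : Fin t → Bool, ∏ p, gpf o p (s p)) := by
    intro o
    rw [Finset.mul_sum]
    rfl
  rw [Finset.sum_congr rfl fun o _ => hg o, univ_option, Finset.sum_insertNone]
  by_cases hp : (pairc pm i).isSome
  · rw [if_pos hp]
    have h1 : gcf pm i (none : Option (Fin t)) = -1 := by simp [gcf, hp]
    have h2 : ∀ q : Fin t, gcf pm i (some q) = 0 := fun q => by simp [gcf, hp]
    simp only [h1, h2, zero_mul, Finset.sum_const_zero, sum_s_none]
    ring
  · rw [if_neg hp]
    have h1 : gcf pm i (none : Option (Fin t)) = ((B t).degree (co t i) : ℚ) := by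
      rw [gcf.eq_def, if_neg hp]
    have h2 : ∀ q : Fin t, gcf pm i (some q) = -1 := fun q => by
      rw [gcf.eq_def, if_neg hp]
    simp only [h1, h2, sum_s_none, sum_s_some, neg_mul, neg_neg, Finset.sum_const,
      Finset.card_univ, Fintype.card_fin, nsmul_eq_mul]
    ring

lemma inner_sum (pm : Bool × Bool × Bool) :
    (∑ r : (Fin 4 → Option (Fin t)) × (Fin 4 → Fin t → Bool),
        ∏ i : Fin 4, g pm i (r.1 i) (r.2 i))
      = ∏ i : Fin 4, (∑ o : Option (Fin t), ∑ s : Fin t → Bool, g pm i o s) := by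
  rw [Fintype.sum_prod_type]
  have step1 : ∀ cm : Fin 4 → Option (Fin t),
      (∑ sw : Fin 4 → Fin t → Bool, ∏ i : Fin 4, g pm i (cm i) (sw i))
        = ∏ i : Fin 4, (∑ s : Fin t → Bool, g pm i (cm i) s) := by
    intro cm
    rw [Fintype.prod_sum]
  rw [Finset.sum_congr rfl fun cm _ => step1 cm, Fintype.prod_sum]

end LapB

namespace LapB
variable {t : ℕ}

lemma degc (i : Fin 4) :
    ((B t).degree (co t i) : ℚ) = (t : ℚ) + (if i = 0 ∨ i = 3 then 1 else 2) := by
  rw [deg_co]; push_cast; split <;> norm_num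

lemma sum_Wn_eval :
    (∑ x : X t, Wn x) =
      (((t : ℚ) + 1) * 3 ^ t + t * 3 ^ (t - 1)) ^ 2
          * (((t : ℚ) + 2) * 3 ^ t + t * 3 ^ (t - 1)) ^ 2
        + (3 : ℚ) ^ t * 3 ^ t
          * (2 * ((((t : ℚ) + 1) * 3 ^ t + t * 3 ^ (t - 1))
              * (((t : ℚ) + 2) * 3 ^ t + t * 3 ^ (t - 1)))
            + (((t : ℚ) + 1) * 3 ^ t + t * 3 ^ (t - 1)) ^ 2)
        + (3 : ℚ) ^ t * 3 ^ t * 3 ^ t * 3 ^ t := by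
  have main : ∀ pm : Bool × Bool × Bool,
      (∑ r : (Fin 4 → Option (Fin t)) × (Fin 4 → Fin t → Bool), Wn (pm, r))
        = (if pmOK pm then 1 else 0) *
            ∏ i : Fin 4, (if (pairc pm i).isSome then -((3 : ℚ) ^ t)
              else ((B t).degree (co t i) : ℚ) * 3 ^ t + t * 3 ^ (t - 1)) := by
    intro pm
    have h0 : ∀ r : (Fin 4 → Option (Fin t)) × (Fin 4 → Fin t → Bool),
        Wn (pm, r) = (if pmOK pm then 1 else 0) * ∏ i : Fin 4, g pm i (r.1 i) (r.2 i) :=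
      fun r => rfl
    rw [Finset.sum_congr rfl fun r _ => h0 r, ← Finset.mul_sum, inner_sum,
      Finset.prod_congr rfl fun i _ => sum_os pm i]
  rw [Fintype.sum_prod_type, Finset.sum_congr rfl fun pm _ => main pm]
  simp only [Fintype.sum_prod_type, sum_bool']
  have hd0 : ((B t).degree (co t 0) : ℚ) = (t : ℚ) + 1 := by rw [degc]; norm_num
  have hd1 : ((B t).degree (co t 1) : ℚ) = (t : ℚ) + 2 := by
    rw [degc]; rw [if_neg (by decide)]
  have hd2 : ((B t).degree (co t 2) : ℚ) = (t : ℚ) + 2 := by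
    rw [degc]; rw [if_neg (by decide)]
  have hd3 : ((B t).degree (co t 3) : ℚ) = (t : ℚ) + 1 := by
    rw [degc]; rw [if_pos (by decide)]
  simp only [Fin.prod_univ_four, pairc_0, pairc_1, pairc_2, pairc_3, pmOK]
  norm_num [hd0, hd1, hd2, hd3]
  ring

end LapB

theorem lapRatio_B' (t : ℕ) (ht : 4 ≤ t) :
    (((LapB.B t).lapMatrix ℚ).permanent / ∏ v : LapB.V t, ((LapB.B t).degree v : ℚ)) =
      (3 / 2 : ℚ) ^ (4 * t) *
        (2 * (128 * (t : ℚ) ^ 4 + 576 * (t : ℚ) ^ 3 + 1152 * (t : ℚ) ^ 2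
            + 1080 * (t : ℚ) + 405)) /
        (81 * ((t : ℚ) + 1) ^ 2 * ((t : ℚ) + 2) ^ 2) := by
  rw [LapB.per_eq_sum_Wn, LapB.sum_Wn_eval, LapB.prod_deg]
  obtain ⟨n, rfl⟩ : ∃ n, t = n + 1 := ⟨t - 1, by omega⟩
  rw [Nat.add_sub_cancel]
  push_cast
  rw [div_eq_div_iff (by positivity) (by positivity)]
  rw [show ((3 : ℚ) / 2) ^ (4 * (n + 1)) = (3 : ℚ) ^ (4 * (n + 1)) / 2 ^ (4 * (n + 1)) from
    div_pow 3 2 _]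
  have h2 : ((2 : ℚ)) ^ (4 * (n + 1)) ≠ 0 := by positivity
  field_simp
  ring

/-- For `t ≥ 4`,
`π(T(t,t,t,t)) = (3/2)^{4t} · 2(128t⁴+576t³+1152t²+1080t+405)/(81(t+1)²(t+2)²)`. -/
theorem lapRatio_B (t : ℕ) (ht : 4 ≤ t) :
    lapRatio (Tfam 4 (fun _ => t)) =
      (3 / 2 : ℚ) ^ (4 * t) *
        (2 * (128 * (t : ℚ) ^ 4 + 576 * (t : ℚ) ^ 3 + 1152 * (t : ℚ) ^ 2
            + 1080 * (t : ℚ) + 405)) /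
        (81 * ((t : ℚ) + 1) ^ 2 * ((t : ℚ) + 2) ^ 2) := by
  exact lapRatio_B' t ht
end

section
/- For every integer t ≥ 4, the Laplacian ratio of C_t = T(t,t,t+1,t) satisfies π(C_t) = (3/2)^{4t+1} · 2(128t^4 + 704t^3 + 1536t^2 + 1512t + 567) / (81(t+1)^2(t+2)(t+3)). -/
open Finset SimpleGraph Matrix

section PermExpand
open Equiv

variable {V : Type*} [Fintype V] [DecidableEq V]

/-- Replace the rows and columns indexed by `s` of `M` by identity rows/columns. -/
def wipeS (M : Matrix V V ℚ) (s : Finset V) : Matrix V V ℚ :=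
  fun i j => if i ∈ s ∨ j ∈ s then (if i = j then 1 else 0) else M i j

lemma permanent_wipeS (M : Matrix V V ℚ) (s : Finset V) :
    (wipeS M s).permanent
      = ∑ σ ∈ univ.filter (fun σ : Perm V => ∀ v ∈ s, σ v = v),
          ∏ i ∈ sᶜ, M (σ i) i := by
  classical
  rw [Matrix.permanent,
    ← Finset.sum_filter_add_sum_filter_not univ (fun σ : Perm V => ∀ v ∈ s, σ v = v)]
  have h0 : ∑ σ ∈ univ.filter (fun σ : Perm V => ¬ ∀ v ∈ s, σ v = v),
      ∏ i, wipeS M s (σ i) i = 0 := by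
    apply Finset.sum_eq_zero
    intro σ hσ
    simp only [Finset.mem_filter, not_forall] at hσ
    obtain ⟨v, hv, hne⟩ := hσ.2
    refine Finset.prod_eq_zero (Finset.mem_univ v) ?_
    simp [wipeS, hv, hne]
  rw [h0, add_zero]
  apply Finset.sum_congr rfl
  intro σ hσ
  simp only [Finset.mem_filter] at hσ
  have hfix : ∀ v ∈ s, σ v = v := hσ.2
  rw [← Finset.prod_mul_prod_compl s (fun i => wipeS M s (σ i) i)]
  have h1 : ∏ i ∈ s, wipeS M s (σ i) i = 1 := by
    apply Finset.prod_eq_one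
    intro v hv
    simp [wipeS, hv, hfix v hv]
  rw [h1, one_mul]
  apply Finset.prod_congr rfl
  intro i hi
  simp only [Finset.mem_compl] at hi
  have hσi : σ i ∉ s := by
    intro h
    have h2 : σ i = i := σ.injective (hfix _ h)
    rw [h2] at h
    exact hi h
  simp [wipeS, hi, hσi]

lemma compl_pair (v w : V) : ({v, w} : Finset V)ᶜ = (univ.erase v).erase w := by
  ext u; simp [and_comm]

/-- Expansion of the permanent at a vertex `v` whose row and column are supported
on `{v, w}`. -/
lemma permanent_leaf_expand (M : Matrix V V ℚ) (v w : V) (hvw : v ≠ w)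
    (hrow : ∀ u, u ≠ v → u ≠ w → M v u = 0)
    (hcol : ∀ u, u ≠ v → u ≠ w → M u v = 0) :
    M.permanent = M v v * (wipeS M {v}).permanent
      + M v w * M w v * (wipeS M {v, w}).permanent := by
  classical
  rw [Matrix.permanent,
    ← Finset.sum_filter_add_sum_filter_not univ (fun σ : Perm V => σ v = v)]
  rw [← Finset.sum_filter_add_sum_filter_not
    (univ.filter (fun σ : Perm V => ¬ σ v = v)) (fun σ : Perm V => σ v = w ∧ σ w = v)]
  have h3 : ∑ σ ∈ (univ.filter (fun σ : Perm V => ¬ σ v = v)).filter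
      (fun σ : Perm V => ¬ (σ v = w ∧ σ w = v)), ∏ i, M (σ i) i = 0 := by
    apply Finset.sum_eq_zero
    intro σ hσ
    simp only [Finset.mem_filter, Finset.mem_univ, true_and, not_and] at hσ
    obtain ⟨h1, h2⟩ := hσ
    by_cases hvw2 : σ v = w
    · have h4 : σ w ≠ v := h2 hvw2
      refine Finset.prod_eq_zero (Finset.mem_univ (σ⁻¹ v)) ?_
      rw [Equiv.Perm.coe_inv, Equiv.apply_symm_apply]
      apply hrow
      · intro hh; apply h1; nth_rewrite 1 [← hh]; exact σ.apply_symm_apply v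
      · intro hh; apply h4; rw [← hh]; exact σ.apply_symm_apply v
    · exact Finset.prod_eq_zero (Finset.mem_univ v) (hcol _ h1 hvw2)
  rw [h3, add_zero]
  congr 1
  · -- fixed at v
    rw [permanent_wipeS, Finset.mul_sum]
    have hc : ({v} : Finset V)ᶜ = univ.erase v := by ext u; simp
    rw [hc]
    apply Finset.sum_congr
    · apply Finset.filter_congr; intro σ _; simp
    · intro σ hσ
      simp only [Finset.mem_filter, Finset.mem_univ, true_and] at hσ
      rw [← Finset.mul_prod_erase univ (fun i => M (σ i) i) (Finset.mem_univ v),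
        hσ v (Finset.mem_singleton_self v)]
  · -- swap at v w
    rw [permanent_wipeS, Finset.mul_sum, compl_pair v w]
    refine Finset.sum_bij' (fun σ _ => σ * Equiv.swap v w) (fun σ _ => σ * Equiv.swap v w)
      ?_ ?_ ?_ ?_ ?_
    · intro σ hσ
      simp only [Finset.mem_filter, Finset.mem_univ, true_and, not_and] at hσ ⊢
      intro u hu
      simp only [Finset.mem_insert, Finset.mem_singleton] at hu
      rcases hu with rfl | rfl
      · rw [Equiv.Perm.mul_apply, Equiv.swap_apply_left]; exact hσ.2.2
      · rw [Equiv.Perm.mul_apply, Equiv.swap_apply_right]; exact hσ.2.1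
    · intro σ hσ
      simp only [Finset.mem_filter, Finset.mem_univ, true_and, not_and] at hσ ⊢
      have h1 := hσ v (by simp)
      have h2 := hσ w (by simp)
      have e1 : (σ * Equiv.swap v w) v = w := by
        rw [Equiv.Perm.mul_apply, Equiv.swap_apply_left]; exact h2
      have e2 : (σ * Equiv.swap v w) w = v := by
        rw [Equiv.Perm.mul_apply, Equiv.swap_apply_right]; exact h1
      refine ⟨?_, e1, e2⟩
      rw [e1]; exact Ne.symm hvw
    · intro σ hσ; ext u; simp [mul_assoc]
    · intro σ hσ; ext u; simp [mul_assoc]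
    · intro σ hσ
      simp only [Finset.mem_filter, Finset.mem_univ, true_and, not_and] at hσ
      have hw : w ∈ univ.erase v := by simp [Ne.symm hvw]
      rw [← Finset.mul_prod_erase univ (fun i => M (σ i) i) (Finset.mem_univ v),
          ← Finset.mul_prod_erase _ (fun i => M (σ i) i) hw, hσ.2.1, hσ.2.2]
      have heq : ∏ i ∈ (univ.erase v).erase w, M (σ i) i
          = ∏ i ∈ (univ.erase v).erase w, M ((σ * Equiv.swap v w) i) i := by
        apply Finset.prod_congr rfl
        intro i hi
        simp only [Finset.mem_erase] at hi
        rw [Equiv.Perm.mul_apply, Equiv.swap_apply_of_ne_of_ne hi.2.1 hi.1]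
      rw [heq]; ring

end PermExpand



/-- vertex type of `Tfam 4 a` -/
abbrev Vt (a : ℕ → ℕ) := Fin 4 ⊕ (Σ i : Fin 4, Fin (a i) × Bool)

/-- core degrees -/
def Dg (a : ℕ → ℕ) (i : Fin 4) : ℚ := (a i : ℚ) + (if i = 0 ∨ i = 3 then 1 else 2)

def diagv (a : ℕ → ℕ) : Vt a → ℚ
  | Sum.inl i => Dg a i
  | Sum.inr ⟨_, _, b⟩ => if b then 1 else 2

def adjB (a : ℕ → ℕ) : Vt a → Vt a → Bool
  | Sum.inl i, Sum.inl j => decide ((i : ℕ) + 1 = (j : ℕ)) || decide ((j : ℕ) + 1 = (i : ℕ))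
  | Sum.inl i, Sum.inr ⟨i', _, b⟩ => decide (i = i') && decide (b = false)
  | Sum.inr ⟨i', _, b⟩, Sum.inl i => decide (i = i') && decide (b = false)
  | Sum.inr ⟨i, p, b⟩, Sum.inr ⟨i', p', b'⟩ =>
      decide (i = i') && decide ((p : ℕ) = (p' : ℕ)) && decide (b ≠ b')

lemma adjB_comm (a : ℕ → ℕ) (u v : Vt a) : adjB a u v = adjB a v u := by
  rcases u with i | ⟨i, p, b⟩ <;> rcases v with j | ⟨j, q, c⟩ <;>
    simp [adjB, Bool.or_comm, Bool.and_comm, eq_comm, ne_comm]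

/-- the "generalized Laplacian" with alive-state `s` -/
def NN (a : ℕ → ℕ) (s : Vt a → Bool) : Matrix (Vt a) (Vt a) ℚ :=
  fun u v =>
    if u = v then (if s u then diagv a u else 1)
    else if s u && s v && adjB a u v then -1 else 0

lemma NN_comm (a : ℕ → ℕ) (s : Vt a → Bool) (u v : Vt a) : NN a s u v = NN a s v u := by
  unfold NN
  by_cases h : u = v
  · subst h; rfl
  · rw [if_neg h, if_neg (Ne.symm h), adjB_comm, Bool.and_comm (s u), Bool.and_assoc,
      Bool.and_comm (s u)]

def kill {a : ℕ → ℕ} (s : Vt a → Bool) (v : Vt a) : Vt a → Bool :=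
  fun u => if u = v then false else s u

def sSt {a : ℕ → ℕ} (c : Fin 4 → Bool) (k : Fin 4 → ℕ) : Vt a → Bool
  | Sum.inl i => c i
  | Sum.inr ⟨i, p, _⟩ => decide ((p : ℕ) < k i)


lemma wipe_one (a : ℕ → ℕ) (s : Vt a → Bool) (v : Vt a) :
    wipeS (NN a s) {v} = NN a (kill s v) := by
  ext i j
  by_cases h1 : i = v <;> by_cases h2 : j = v <;>
    simp_all [wipeS, NN, kill]

lemma wipe_two (a : ℕ → ℕ) (s : Vt a → Bool) (v w : Vt a) :
    wipeS (NN a s) {v, w} = NN a (kill (kill s v) w) := by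
  ext i j
  by_cases h1 : i = v <;> by_cases h1' : i = w <;> by_cases h2 : j = v <;> by_cases h2' : j = w <;>
    simp_all [wipeS, NN, kill]


section StateId

variable (a : ℕ → ℕ) (c : Fin 4 → Bool) (k : Fin 4 → ℕ) (i : Fin 4)

lemma kill_core :
    kill (a := a) (sSt c k) (Sum.inl i) = sSt (Function.update c i false) k := by
  funext u
  rcases u with j | ⟨j, q, b⟩ <;>
    simp only [kill, sSt, Function.update, Sum.inr.injEq, Sum.inl.injEq]
  · split_ifs with h1 h2 h2 <;> simp_all
  · simp

lemma kill_pendant (n' : ℕ) (hki : k i = n' + 1) (hp : n' < a i) :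
    kill (kill (a := a) (sSt c k) (Sum.inr ⟨i, ⟨n', hp⟩, true⟩)) (Sum.inr ⟨i, ⟨n', hp⟩, false⟩)
      = sSt c (Function.update k i n') := by
  funext u
  rcases u with j | ⟨j, q, b⟩
  · simp [kill, sSt]
  · by_cases hji : j = i
    · subst hji
      by_cases hq : (q : ℕ) = n'
      · have hq' : q = ⟨n', hp⟩ := Fin.ext hq
        subst hq'
        rcases b <;> simp [kill, sSt, Function.update, hki]
      · have hq' : q ≠ ⟨n', hp⟩ := fun h => hq (by rw [h])
        have h1 : (Sum.inr ⟨j, q, true⟩ : Vt a) ≠ Sum.inr ⟨j, ⟨n', hp⟩, true⟩ := by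
          simp [hq']
        have h2 : (Sum.inr ⟨j, q, true⟩ : Vt a) ≠ Sum.inr ⟨j, ⟨n', hp⟩, false⟩ := by simp
        have h3 : (Sum.inr ⟨j, q, false⟩ : Vt a) ≠ Sum.inr ⟨j, ⟨n', hp⟩, true⟩ := by simp
        have h4 : (Sum.inr ⟨j, q, false⟩ : Vt a) ≠ Sum.inr ⟨j, ⟨n', hp⟩, false⟩ := by
          simp [hq']
        rcases b <;>
          simp only [kill, sSt, Function.update, h1, h2, h3, h4, if_false, dif_pos rfl,
            decide_eq_decide] <;> (simp only [Fin.val_mk, dite_eq_ite, if_true]; omega)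
    · have h1 : ∀ (q' : Fin (a i)) (b b' : Bool), (Sum.inr ⟨j, q, b⟩ : Vt a) ≠ Sum.inr ⟨i, q', b'⟩ := by
        intro q' b b' h
        simp only [Sum.inr.injEq] at h
        exact hji (congrArg Sigma.fst h)
      simp [kill, sSt, Function.update, h1, hji]
end StateId

section Peel

variable (a : ℕ → ℕ)

lemma adjB_leaf {i : Fin 4} {p : Fin (a i)} {u : Vt a}
    (h : adjB a (Sum.inr ⟨i, p, true⟩) u = true) : u = Sum.inr ⟨i, p, false⟩ := by
  rcases u with j | ⟨j, q, b⟩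
  · simp [adjB] at h
  · simp only [adjB, Bool.and_eq_true, decide_eq_true_eq] at h
    obtain ⟨⟨rfl, hq⟩, hb⟩ := h
    have : q = p := Fin.ext hq.symm
    subst this
    rcases b with _ | _
    · rfl
    · exact absurd rfl hb

lemma adjB_mid {i : Fin 4} {p : Fin (a i)} {u : Vt a}
    (h : adjB a (Sum.inr ⟨i, p, false⟩) u = true) :
    u = Sum.inr ⟨i, p, true⟩ ∨ u = Sum.inl i := by
  rcases u with j | ⟨j, q, b⟩
  · right
    simp only [adjB, Bool.and_eq_true, decide_eq_true_eq] at h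
    rw [h.1]
  · left
    simp only [adjB, Bool.and_eq_true, decide_eq_true_eq] at h
    obtain ⟨⟨rfl, hq⟩, hb⟩ := h
    have : q = p := Fin.ext hq.symm
    subst this
    rcases b with _ | _
    · exact absurd rfl hb
    · rfl

lemma adjB_core {i : Fin 4} {u : Vt a}
    (h : adjB a (Sum.inl i) u = true) :
    (∃ j : Fin 4, u = Sum.inl j ∧ ((i : ℕ) + 1 = (j : ℕ) ∨ (j : ℕ) + 1 = (i : ℕ)))
      ∨ ∃ q : Fin (a i), u = Sum.inr ⟨i, q, false⟩ := by
  rcases u with j | ⟨j, q, b⟩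
  · left
    exact ⟨j, rfl, by simpa [adjB] using h⟩
  · right
    simp only [adjB, Bool.and_eq_true, decide_eq_true_eq] at h
    obtain ⟨rfl, hb⟩ := h
    subst hb
    exact ⟨q, rfl⟩

lemma peel_pendant (c : Fin 4 → Bool) (k : Fin 4 → ℕ) (i : Fin 4) (n' : ℕ)
    (hki : k i = n' + 1) (hk : k i ≤ a i) :
    (NN a (sSt c k)).permanent
      = 3 * (NN a (sSt c (Function.update k i n'))).permanent
        + (if c i then 1 else 0) *
            (NN a (sSt (Function.update c i false) (Function.update k i n'))).permanent := by
  have hp : n' < a i := by omega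
  set p : Fin (a i) := ⟨n', hp⟩ with hpdef
  set l : Vt a := Sum.inr ⟨i, p, true⟩ with hldef
  set m : Vt a := Sum.inr ⟨i, p, false⟩ with hmdef
  set s : Vt a → Bool := sSt c k with hsdef
  have hlm : l ≠ m := by simp [hldef, hmdef]
  have hsl : s l = true := by simp [hsdef, sSt, hki, hpdef, hldef]
  have hsm : s m = true := by simp [hsdef, sSt, hki, hpdef, hmdef]
  have hadjlm : adjB a l m = true := by simp [hldef, hmdef, adjB]
  have hrow1 : ∀ u, u ≠ l → u ≠ m → NN a s l u = 0 := by
    intro u hu1 hu2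
    have hadj : adjB a l u = false := by
      rcases hb : adjB a l u
      · rfl
      · exact absurd (adjB_leaf a hb) hu2
    have hne : l ≠ u := Ne.symm hu1
    simp [NN, hne, hadj]
  have hcol1 : ∀ u, u ≠ l → u ≠ m → NN a s u l = 0 := by
    intro u hu1 hu2
    rw [NN_comm]
    exact hrow1 u hu1 hu2
  have step1 := permanent_leaf_expand (NN a s) l m hlm hrow1 hcol1
  rw [wipe_one, wipe_two] at step1
  have hll : NN a s l l = 1 := by simp [NN, hsl, hldef, diagv]
  have hlmval : NN a s l m = -1 := by simp [NN, hlm, hsl, hsm, hadjlm]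
  have hmlval : NN a s m l = -1 := by rw [NN_comm]; exact hlmval
  rw [hll, hlmval, hmlval, kill_pendant a c k i n' hki hp] at step1
  -- second expansion on s₁ = kill s l
  set s₁ : Vt a → Bool := kill s l with hs1def
  have hs1m : s₁ m = true := by
    rw [hs1def, kill, if_neg (Ne.symm hlm)]; exact hsm
  have hs1l : s₁ l = false := by rw [hs1def, kill, if_pos rfl]
  have hmi : m ≠ Sum.inl i := by simp [hmdef]
  have hadjmi : adjB a m (Sum.inl i) = true := by simp [hmdef, adjB]
  have hrow2 : ∀ u, u ≠ m → u ≠ Sum.inl i → NN a s₁ m u = 0 := by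
    intro u hu1 hu2
    rcases hb : adjB a m u with _ | _
    · have hne : m ≠ u := Ne.symm hu1
      simp [NN, hne, hb]
    · rcases adjB_mid a hb with h | h
      · -- u = l, dead in s₁
        have hne : m ≠ u := Ne.symm hu1
        have : s₁ u = false := by rw [h]; exact hs1l
        simp [NN, hne, this]
      · exact absurd h hu2
  have hcol2 : ∀ u, u ≠ m → u ≠ Sum.inl i → NN a s₁ u m = 0 := by
    intro u hu1 hu2
    rw [NN_comm]
    exact hrow2 u hu1 hu2
  have step2 := permanent_leaf_expand (NN a s₁) m (Sum.inl i) hmi hrow2 hcol2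
  rw [wipe_one, wipe_two] at step2
  have hmm : NN a s₁ m m = 2 := by simp [NN, hs1m, hmdef, diagv, show s₁ (Sum.inr ⟨i, p, false⟩) = true from hs1m]
  have hmival : NN a s₁ m (Sum.inl i) = if c i then -1 else 0 := by
    have hs1i : s₁ (Sum.inl i) = c i := by
      rw [hs1def, kill, if_neg]
      · rfl
      · simp [hldef]
    rcases hc : c i with _ | _ <;> simp [NN, hmi, hs1m, hs1i, hc, hadjmi]
  have himval : NN a s₁ (Sum.inl i) m = if c i then -1 else 0 := by
    rw [NN_comm]; exact hmival
  have hkk : kill s₁ m = sSt c (Function.update k i n') := by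
    rw [hs1def, hsdef, hldef, hmdef, hpdef]
    exact kill_pendant a c k i n' hki hp
  rw [hkk, kill_core a c (Function.update k i n') i, hmm, hmival, himval] at step2
  rw [step1, step2]
  rcases hc : c i with _ | _ <;> simp <;> ring

end Peel

section PeelCore

variable (a : ℕ → ℕ)

lemma peel_core (c : Fin 4 → Bool) (k : Fin 4 → ℕ) (i w : Fin 4)
    (hiw : i ≠ w)
    (hadjiw : adjB a (Sum.inl i) (Sum.inl w) = true)
    (hci : c i = true)
    (hdead : ∀ j : Fin 4, adjB a (Sum.inl i) (Sum.inl j) = true → j ≠ w → c j = false)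
    (hki : k i = 0) :
    (NN a (sSt c k)).permanent
      = Dg a i * (NN a (sSt (Function.update c i false) k)).permanent
        + (if c w then 1 else 0) *
          (NN a (sSt (Function.update (Function.update c i false) w false) k)).permanent := by
  set s : Vt a → Bool := sSt c k with hsdef
  have hne : (Sum.inl i : Vt a) ≠ Sum.inl w := by simp [hiw]
  have hsi : s (Sum.inl i) = true := hci
  have hrow : ∀ u, u ≠ Sum.inl i → u ≠ Sum.inl w → NN a s (Sum.inl i) u = 0 := by
    intro u hu1 hu2
    rcases hb : adjB a (Sum.inl i) u with _ | _
    · have h : (Sum.inl i : Vt a) ≠ u := Ne.symm hu1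
      simp [NN, h, hb]
    · rcases adjB_core a hb with ⟨j, rfl, hj⟩ | ⟨q, rfl⟩
      · have hjw : j ≠ w := fun h => hu2 (by rw [h])
        have : s (Sum.inl j) = false := hdead j hb hjw
        have h : (Sum.inl i : Vt a) ≠ Sum.inl j := Ne.symm hu1
        simp [NN, h, this]
      · have : s (Sum.inr ⟨i, q, false⟩) = false := by
          simp [hsdef, sSt, hki]
        have h : (Sum.inl i : Vt a) ≠ Sum.inr ⟨i, q, false⟩ := by simp
        simp [NN, h, this]
  have hcol : ∀ u, u ≠ Sum.inl i → u ≠ Sum.inl w → NN a s u (Sum.inl i) = 0 := by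
    intro u hu1 hu2; rw [NN_comm]; exact hrow u hu1 hu2
  have step := permanent_leaf_expand (NN a s) (Sum.inl i) (Sum.inl w) hne hrow hcol
  rw [wipe_one, wipe_two] at step
  have hii : NN a s (Sum.inl i) (Sum.inl i) = Dg a i := by simp [NN, hsi, diagv]
  have hiwv : NN a s (Sum.inl i) (Sum.inl w) = if c w then -1 else 0 := by
    have hsw : s (Sum.inl w) = c w := rfl
    rcases hc : c w with _ | _ <;> simp [NN, hne, hsi, hsw, hc, hadjiw]
  have hwiv : NN a s (Sum.inl w) (Sum.inl i) = if c w then -1 else 0 := by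
    rw [NN_comm]; exact hiwv
  rw [hii, hiwv, hwiv, hsdef, kill_core, kill_core] at step
  rw [step]
  rcases hc : c w with _ | _ <;> simp <;> ring

end PeelCore
def Qf (c : Fin 4 → Bool) (g : Fin 4 → ℚ) : ℚ :=
  (if c 0 then g 0 else 1) * (if c 1 then g 1 else 1) * (if c 2 then g 2 else 1)
      * (if c 3 then g 3 else 1)
    + (if c 0 && c 1 then 1 else 0) * ((if c 2 then g 2 else 1) * (if c 3 then g 3 else 1))
    + (if c 1 && c 2 then 1 else 0) * ((if c 0 then g 0 else 1) * (if c 3 then g 3 else 1))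
    + (if c 2 && c 3 then 1 else 0) * ((if c 0 then g 0 else 1) * (if c 1 then g 1 else 1))
    + (if c 0 && c 1 then 1 else 0) * (if c 2 && c 3 then 1 else 0)

lemma Qf_pendant (c : Fin 4 → Bool) (g g' : Fin 4 → ℚ) (i : Fin 4)
    (hgg : ∀ j, j ≠ i → g j = g' j) (hgi : g i = g' i + 1/3) :
    Qf c g = Qf c g' + (if c i then (1/3) * Qf (Function.update c i false) g' else 0) := by
  have hi : i = 0 ∨ i = 1 ∨ i = 2 ∨ i = 3 := by omega
  rcases hi with rfl | rfl | rfl | rfl <;>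
    [(have e0 := hgi; have e1 := hgg 1 (by decide); have e2 := hgg 2 (by decide);
      have e3 := hgg 3 (by decide));
     (have e1 := hgi; have e0 := hgg 0 (by decide); have e2 := hgg 2 (by decide);
      have e3 := hgg 3 (by decide));
     (have e2 := hgi; have e0 := hgg 0 (by decide); have e1 := hgg 1 (by decide);
      have e3 := hgg 3 (by decide));
     (have e3 := hgi; have e0 := hgg 0 (by decide); have e1 := hgg 1 (by decide);
      have e2 := hgg 2 (by decide))] <;>
  rcases hc0 : c 0 <;> rcases hc1 : c 1 <;> rcases hc2 : c 2 <;> rcases hc3 : c 3 <;>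
    simp [Qf, Function.update, hc0, hc1, hc2, hc3, e0, e1, e2, e3] <;> ring

lemma Qf_core0 (c : Fin 4 → Bool) (g : Fin 4 → ℚ) (hc0 : c 0 = true) :
    Qf c g = g 0 * Qf (Function.update c 0 false) g
      + (if c 1 then 1 else 0) * Qf (Function.update (Function.update c 0 false) 1 false) g := by
  rcases hc1 : c 1 <;> rcases hc2 : c 2 <;> rcases hc3 : c 3 <;>
    simp [Qf, Function.update, hc0, hc1, hc2, hc3] <;> ring

lemma Qf_core1 (c : Fin 4 → Bool) (g : Fin 4 → ℚ) (hc0 : c 0 = false) (hc1 : c 1 = true) :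
    Qf c g = g 1 * Qf (Function.update c 1 false) g
      + (if c 2 then 1 else 0) * Qf (Function.update (Function.update c 1 false) 2 false) g := by
  rcases hc2 : c 2 <;> rcases hc3 : c 3 <;>
    simp [Qf, Function.update, hc0, hc1, hc2, hc3] <;> ring

lemma Qf_core2 (c : Fin 4 → Bool) (g : Fin 4 → ℚ) (hc1 : c 1 = false) (hc2 : c 2 = true) :
    Qf c g = g 2 * Qf (Function.update c 2 false) g
      + (if c 3 then 1 else 0) * Qf (Function.update (Function.update c 2 false) 3 false) g := by
  rcases hc0 : c 0 <;> rcases hc3 : c 3 <;>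
    simp [Qf, Function.update, hc0, hc1, hc2, hc3] <;> ring

lemma Qf_core3 (c : Fin 4 → Bool) (g : Fin 4 → ℚ) (hc2 : c 2 = false) (hc3 : c 3 = true) :
    Qf c g = g 3 * Qf (Function.update c 3 false) g
      + (if c 2 then 1 else 0) * Qf (Function.update (Function.update c 3 false) 2 false) g := by
  rcases hc0 : c 0 <;> rcases hc1 : c 1 <;>
    simp [Qf, Function.update, hc0, hc1, hc2, hc3] <;> ring

lemma Qf_dead (c : Fin 4 → Bool) (g : Fin 4 → ℚ) (h0 : c 0 = false) (h1 : c 1 = false)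
    (h2 : c 2 = false) (h3 : c 3 = false) : Qf c g = 1 := by
  simp [Qf, h0, h1, h2, h3]

lemma NN_dead (a : ℕ → ℕ) (s : Vt a → Bool) (h : ∀ v, s v = false) : NN a s = 1 := by
  ext u v
  by_cases huv : u = v
  · subst huv; simp [NN, h u]
  · simp [NN, huv, h u, Matrix.one_apply_ne huv]

lemma card_filter_update (c : Fin 4 → Bool) (i : Fin 4) (hci : c i = true) :
    (univ.filter (fun j => Function.update c i false j = true)).card + 1
      = (univ.filter (fun j => c j = true)).card := by
  have h : univ.filter (fun j => Function.update c i false j = true)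
      = (univ.filter (fun j => c j = true)).erase i := by
    ext j
    by_cases hj : j = i <;> simp [Function.update, hj, hci]
  rw [h, Finset.card_erase_of_mem (by simp [hci])]
  have hpos : 0 < (univ.filter (fun j => c j = true)).card :=
    Finset.card_pos.mpr ⟨i, by simp [hci]⟩
  omega

lemma main_formula (a : ℕ → ℕ) : ∀ (n : ℕ) (c : Fin 4 → Bool) (k : Fin 4 → ℕ),
    (∀ i, k i ≤ a i) →
    (∑ i : Fin 4, k i) + (univ.filter (fun j => c j = true)).card = n →
    (NN a (sSt c k)).permanent
      = 3 ^ (∑ i : Fin 4, k i) * Qf c (fun i => Dg a i + (k i : ℚ) / 3) := by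
  intro n
  induction n using Nat.strong_induction_on with
  | _ n IH =>
    intro c k hk hn
    by_cases hex : ∃ i, k i ≠ 0
    · obtain ⟨i, hi⟩ := hex
      obtain ⟨n', hki⟩ : ∃ n', k i = n' + 1 := ⟨k i - 1, by omega⟩
      set k' := Function.update k i n' with hk'def
      have hk' : ∀ j, k' j ≤ a j := by
        intro j
        by_cases hj : j = i
        · subst hj; have := hk j; simp [hk'def, Function.update]; omega
        · simp [hk'def, Function.update, hj]; exact hk j
      have hsumk : ∑ j : Fin 4, k j = (∑ j : Fin 4, k' j) + 1 := by
        rw [hk'def, Finset.sum_update_of_mem (Finset.mem_univ i),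
          ← Finset.sum_erase_add univ k (Finset.mem_univ i), hki,
          show (univ \ {i} : Finset (Fin 4)) = univ.erase i from by ext x; simp [and_comm]]
        ring
      have hm1 : (∑ j : Fin 4, k' j) + (univ.filter (fun j => c j = true)).card < n := by omega
      have h1 := IH _ hm1 c k' hk' rfl
      have hg' : ∀ j, j ≠ i → (fun j => Dg a j + (k j : ℚ) / 3) j
          = (fun j => Dg a j + (k' j : ℚ) / 3) j := by
        intro j hj; simp [hk'def, Function.update, hj]
      have hgi : (fun j => Dg a j + (k j : ℚ) / 3) i
          = (fun j => Dg a j + (k' j : ℚ) / 3) i + 1/3 := by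
        simp only [hk'def, Function.update, dif_pos rfl, hki]
        push_cast
        ring
      rw [peel_pendant a c k i n' hki (hk i)]
      by_cases hci : c i = true
      · have hm2 : (∑ j : Fin 4, k' j)
            + (univ.filter (fun j => Function.update c i false j = true)).card < n := by
          have := card_filter_update c i hci
          omega
        have h2 := IH _ hm2 (Function.update c i false) k' hk' rfl
        rw [h1, h2, hsumk,
          Qf_pendant c _ _ i hg' hgi, hci]
        simp only [if_true]
        ring
      · have hcif : c i = false := by simp_all
        rw [h1, hsumk, Qf_pendant c _ _ i hg' hgi, hcif]
        simp only [Bool.false_eq_true, if_false]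
        ring
    · push_neg at hex
      have hk0 : ∀ i, k i = 0 := fun i => by have := hex i; omega
      have hsum0 : ∑ j : Fin 4, k j = 0 := by simp [hk0]
      have hgk : (fun j => Dg a j + (k j : ℚ) / 3) = fun j => Dg a j := by
        funext j; simp [hk0 j]
      rw [hsum0, hgk, pow_zero, one_mul]
      have hcoreadj : ∀ x y : Fin 4, adjB a (Sum.inl x) (Sum.inl y) = true ↔
          ((x : ℕ) + 1 = (y : ℕ) ∨ (y : ℕ) + 1 = (x : ℕ)) := by
        intro x y; simp [adjB]
      have hcm : (∑ j : Fin 4, k j) = 0 := hsum0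
      -- helper to apply IH at a smaller core count
      by_cases h0 : c 0 = true
      · have hdead0 : ∀ j : Fin 4, adjB a (Sum.inl 0) (Sum.inl j) = true → j ≠ 1 → c j = false := by
          intro j hadj hjw
          exfalso; apply hjw; apply Fin.ext
          rw [hcoreadj] at hadj
          simp at hadj ⊢
          omega
        rw [peel_core a c k 0 1 (by decide) ((hcoreadj 0 1).2 (by decide)) h0 hdead0 (hk0 0)]
        have hcard1 := card_filter_update c 0 h0
        have h1 := IH ((∑ j : Fin 4, k j) + (univ.filter
            (fun j => Function.update c 0 false j = true)).card) (by omega)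
            (Function.update c 0 false) k hk rfl
        rw [h1, hsum0, hgk, pow_zero, one_mul]
        by_cases hc1 : c 1 = true
        · have hc1' : Function.update c 0 false 1 = true := by
            simp [Function.update, hc1]
          have hcard2 := card_filter_update (Function.update c 0 false) 1 hc1'
          have h2 := IH ((∑ j : Fin 4, k j) + (univ.filter (fun j =>
              Function.update (Function.update c 0 false) 1 false j = true)).card) (by omega)
              (Function.update (Function.update c 0 false) 1 false) k hk rfl
          rw [h2, hsum0, hgk, pow_zero, one_mul, Qf_core0 c _ h0]
        · have hc1f : c 1 = false := by simp_all
          rw [Qf_core0 c _ h0, hc1f]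
          simp
      · have h0f : c 0 = false := by simp_all
        by_cases h1t : c 1 = true
        · have hdead1 : ∀ j : Fin 4, adjB a (Sum.inl 1) (Sum.inl j) = true → j ≠ 2 → c j = false := by
            intro j hadj hjw
            rw [hcoreadj] at hadj
            have : j = 0 := by
              apply Fin.ext
              have : (j : ℕ) ≠ 2 := fun h => hjw (Fin.ext (by simpa using h))
              simp at hadj ⊢
              omega
            rw [this, h0f]
          rw [peel_core a c k 1 2 (by decide) ((hcoreadj 1 2).2 (by decide)) h1t hdead1 (hk0 1)]
          have hcard1 := card_filter_update c 1 h1t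
          have h1 := IH ((∑ j : Fin 4, k j) + (univ.filter
              (fun j => Function.update c 1 false j = true)).card) (by omega)
              (Function.update c 1 false) k hk rfl
          rw [h1, hsum0, hgk, pow_zero, one_mul]
          by_cases hc2 : c 2 = true
          · have hc2' : Function.update c 1 false 2 = true := by
              simp [Function.update, hc2]
            have hcard2 := card_filter_update (Function.update c 1 false) 2 hc2'
            have h2 := IH ((∑ j : Fin 4, k j) + (univ.filter (fun j =>
                Function.update (Function.update c 1 false) 2 false j = true)).card) (by omega)
                (Function.update (Function.update c 1 false) 2 false) k hk rfl
            rw [h2, hsum0, hgk, pow_zero, one_mul, Qf_core1 c _ h0f h1t, hc2]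
          · have hc2f : c 2 = false := by simp_all
            rw [Qf_core1 c _ h0f h1t, hc2f]
            simp
        · have h1f : c 1 = false := by simp_all
          by_cases h2t : c 2 = true
          · have hdead2 : ∀ j : Fin 4, adjB a (Sum.inl 2) (Sum.inl j) = true → j ≠ 3 → c j = false := by
              intro j hadj hjw
              rw [hcoreadj] at hadj
              have : j = 1 := by
                apply Fin.ext
                have : (j : ℕ) ≠ 3 := fun h => hjw (Fin.ext (by simpa using h))
                simp at hadj ⊢
                omega
              rw [this, h1f]
            rw [peel_core a c k 2 3 (by decide) ((hcoreadj 2 3).2 (by decide)) h2t hdead2 (hk0 2)]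
            have hcard1 := card_filter_update c 2 h2t
            have h1 := IH ((∑ j : Fin 4, k j) + (univ.filter
                (fun j => Function.update c 2 false j = true)).card) (by omega)
                (Function.update c 2 false) k hk rfl
            rw [h1, hsum0, hgk, pow_zero, one_mul]
            by_cases hc3 : c 3 = true
            · have hc3' : Function.update c 2 false 3 = true := by
                simp [Function.update, hc3]
              have hcard2 := card_filter_update (Function.update c 2 false) 3 hc3'
              have h2 := IH ((∑ j : Fin 4, k j) + (univ.filter (fun j =>
                  Function.update (Function.update c 2 false) 3 false j = true)).card) (by omega)
                  (Function.update (Function.update c 2 false) 3 false) k hk rfl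
              rw [h2, hsum0, hgk, pow_zero, one_mul, Qf_core2 c _ h1f h2t, hc3]
            · have hc3f : c 3 = false := by simp_all
              rw [Qf_core2 c _ h1f h2t, hc3f]
              simp
          · have h2f : c 2 = false := by simp_all
            by_cases h3t : c 3 = true
            · have hdead3 : ∀ j : Fin 4, adjB a (Sum.inl 3) (Sum.inl j) = true → j ≠ 2 → c j = false := by
                intro j hadj hjw
                exfalso; apply hjw; apply Fin.ext
                rw [hcoreadj] at hadj
                simp at hadj ⊢
                omega
              rw [peel_core a c k 3 2 (by decide) ((hcoreadj 3 2).2 (by decide)) h3t hdead3 (hk0 3)]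
              have hcard1 := card_filter_update c 3 h3t
              have h1 := IH ((∑ j : Fin 4, k j) + (univ.filter
                  (fun j => Function.update c 3 false j = true)).card) (by omega)
                  (Function.update c 3 false) k hk rfl
              rw [h1, hsum0, hgk, pow_zero, one_mul, Qf_core3 c _ h2f h3t, h2f]
              simp
            · have h3f : c 3 = false := by simp_all
              have hdead : ∀ v, sSt (a := a) c k v = false := by
                intro v
                rcases v with j | ⟨j, q, b⟩
                · show c j = false
                  have : j = 0 ∨ j = 1 ∨ j = 2 ∨ j = 3 := by omega
                  rcases this with rfl | rfl | rfl | rfl <;> assumption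
                · simp [sSt, hk0 j]
              rw [NN_dead a _ hdead, Matrix.permanent_one,
                Qf_dead c _ h0f h1f h2f h3f]

lemma Tfam_adj_iff (a : ℕ → ℕ) (u v : Vt a) :
    (Tfam 4 a).Adj u v ↔ adjB a u v = true := by
  rcases u with i | ⟨i, p, b⟩ <;> rcases v with j | ⟨j, q, d⟩
  · simp only [Tfam, SimpleGraph.fromRel_adj, adjB, Bool.or_eq_true, decide_eq_true_eq,
      ne_eq, Sum.inl.injEq]
    constructor
    · rintro ⟨h1, h2 | h2⟩ <;> omega
    · rintro (h | h)
      · exact ⟨fun hh => by subst hh; omega, Or.inl (by omega)⟩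
      · exact ⟨fun hh => by subst hh; omega, Or.inr (by omega)⟩
  · simp only [Tfam, SimpleGraph.fromRel_adj, adjB, Bool.and_eq_true, decide_eq_true_eq,
      ne_eq]
    constructor
    · rintro ⟨h1, ⟨rfl, rfl⟩ | h2⟩
      · exact ⟨rfl, rfl⟩
      · exact absurd h2 (by simp)
    · rintro ⟨rfl, rfl⟩
      exact ⟨by simp, Or.inl ⟨rfl, rfl⟩⟩
  · simp only [Tfam, SimpleGraph.fromRel_adj, adjB, Bool.and_eq_true, decide_eq_true_eq,
      ne_eq]
    constructor
    · rintro ⟨h1, h2 | ⟨rfl, rfl⟩⟩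
      · exact absurd h2 (by simp)
      · exact ⟨rfl, rfl⟩
    · rintro ⟨rfl, rfl⟩
      exact ⟨by simp, Or.inr ⟨rfl, rfl⟩⟩
  · simp only [Tfam, SimpleGraph.fromRel_adj, adjB, Bool.and_eq_true, decide_eq_true_eq,
      ne_eq]
    constructor
    · rintro ⟨h1, ⟨rfl, hpq, rfl, rfl⟩ | ⟨rfl, hpq, rfl, rfl⟩⟩
      · have : p = q := eq_of_heq hpq
        subst this
        exact ⟨⟨rfl, rfl⟩, by simp⟩
      · have : q = p := eq_of_heq hpq
        subst this
        exact ⟨⟨rfl, rfl⟩, by simp⟩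
    · rintro ⟨⟨rfl, hval⟩, hbd⟩
      have : p = q := Fin.ext hval
      subst this
      have hne : (Sum.inr ⟨i, p, b⟩ : Vt a) ≠ Sum.inr ⟨i, p, d⟩ := by
        intro h
        simp only [Sum.inr.injEq] at h
        injection h with h1 h2
        exact hbd (congrArg Prod.snd h2)
      refine ⟨hne, ?_⟩
      rcases b <;> rcases d <;> simp_all

def dnat (a : ℕ → ℕ) : Vt a → ℕ
  | Sum.inl i => a i + (if i = 0 ∨ i = 3 then 1 else 2)
  | Sum.inr ⟨_, _, b⟩ => if b then 1 else 2

lemma degree_eq_s12 (a : ℕ → ℕ) (u : Vt a) : (Tfam 4 a).degree u = dnat a u := by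
  classical
  rw [← SimpleGraph.card_neighborFinset_eq_degree, SimpleGraph.neighborFinset_eq_filter,
    Finset.card_filter]
  rw [Fintype.sum_sum_type]
  have hsig : ∀ f : (Σ i : Fin 4, Fin (a i) × Bool) → ℕ,
      ∑ x : (Σ i : Fin 4, Fin (a i) × Bool), f x
        = ∑ j : Fin 4, ∑ q : Fin (a j), (f ⟨j, q, false⟩ + f ⟨j, q, true⟩) := by
    intro f
    rw [← Finset.univ_sigma_univ, Finset.sum_sigma]
    refine Finset.sum_congr rfl fun j _ => ?_
    rw [Fintype.sum_prod_type]
    refine Finset.sum_congr rfl fun q _ => ?_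
    rw [Fintype.sum_bool]
    ring
  rcases u with i | ⟨i, p, b⟩
  · rw [hsig]
    have hA : (∑ x : Fin 4, if (Tfam 4 a).Adj (Sum.inl i) (Sum.inl x) then 1 else 0)
        = (if i = 0 ∨ i = 3 then 1 else 2) := by
      have hiff : ∀ x : Fin 4, (Tfam 4 a).Adj (Sum.inl i) (Sum.inl x)
          ↔ ((i : ℕ) + 1 = (x : ℕ) ∨ (x : ℕ) + 1 = (i : ℕ)) := by
        intro x
        rw [Tfam_adj_iff]
        simp [adjB]
      simp only [hiff]
      fin_cases i <;> decide
    have hB : (∑ x : Fin 4, ∑ q : Fin (a x),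
        ((if (Tfam 4 a).Adj (Sum.inl i) (Sum.inr ⟨x, q, false⟩) then 1 else 0)
          + (if (Tfam 4 a).Adj (Sum.inl i) (Sum.inr ⟨x, q, true⟩) then 1 else 0))) = a i := by
      have hterm : ∀ (x : Fin 4) (q : Fin (a x)),
          ((if (Tfam 4 a).Adj (Sum.inl i) (Sum.inr ⟨x, q, false⟩) then 1 else 0)
            + (if (Tfam 4 a).Adj (Sum.inl i) (Sum.inr ⟨x, q, true⟩) then (1:ℕ) else 0))
            = if i = x then 1 else 0 := by
        intro x q
        have h1 : (Tfam 4 a).Adj (Sum.inl i) (Sum.inr ⟨x, q, false⟩) ↔ i = x := by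
          rw [Tfam_adj_iff]; simp [adjB]
        have h2 : ¬ (Tfam 4 a).Adj (Sum.inl i) (Sum.inr ⟨x, q, true⟩) := by
          rw [Tfam_adj_iff]; simp [adjB]
        rw [if_neg h2]
        by_cases h : i = x
        · rw [if_pos (h1.2 h), if_pos h]
        · rw [if_neg (fun hh => h (h1.1 hh)), if_neg h]
      have : ∀ x : Fin 4, (∑ q : Fin (a x),
          ((if (Tfam 4 a).Adj (Sum.inl i) (Sum.inr ⟨x, q, false⟩) then 1 else 0)
            + (if (Tfam 4 a).Adj (Sum.inl i) (Sum.inr ⟨x, q, true⟩) then (1:ℕ) else 0)))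
            = if i = x then a x else 0 := by
        intro x
        rw [Finset.sum_congr rfl fun q _ => hterm x q]
        by_cases h : i = x <;> simp [h]
      rw [Finset.sum_congr rfl fun x _ => this x, Finset.sum_ite_eq univ i (fun x => a (x : Fin 4))]
      simp
    rw [hA, hB, dnat]
    omega
  · rw [hsig]
    have hA : (∑ x : Fin 4, if (Tfam 4 a).Adj (Sum.inr ⟨i, p, b⟩) (Sum.inl x) then 1 else 0)
        = if b then 0 else 1 := by
      have hterm : ∀ x : Fin 4, (if (Tfam 4 a).Adj (Sum.inr ⟨i, p, b⟩) (Sum.inl x) then (1:ℕ) else 0)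
          = if x = i ∧ b = false then 1 else 0 := by
        intro x
        have h1 : (Tfam 4 a).Adj (Sum.inr ⟨i, p, b⟩) (Sum.inl x) ↔ (x = i ∧ b = false) := by
          rw [Tfam_adj_iff]; simp [adjB]
        by_cases h : x = i ∧ b = false
        · rw [if_pos (h1.2 h), if_pos h]
        · rw [if_neg (fun hh => h (h1.1 hh)), if_neg h]
      rw [Finset.sum_congr rfl fun x _ => hterm x]
      rcases b <;> simp
    have hB : (∑ x : Fin 4, ∑ q : Fin (a x),
        ((if (Tfam 4 a).Adj (Sum.inr ⟨i, p, b⟩) (Sum.inr ⟨x, q, false⟩) then 1 else 0)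
          + (if (Tfam 4 a).Adj (Sum.inr ⟨i, p, b⟩) (Sum.inr ⟨x, q, true⟩) then (1:ℕ) else 0))) = 1 := by
      have hterm : ∀ (x : Fin 4) (q : Fin (a x)) (d : Bool),
          (if (Tfam 4 a).Adj (Sum.inr ⟨i, p, b⟩) (Sum.inr ⟨x, q, d⟩) then (1:ℕ) else 0)
            = if (i = x ∧ (p : ℕ) = (q : ℕ) ∧ b ≠ d) then 1 else 0 := by
        intro x q d
        have h1 : (Tfam 4 a).Adj (Sum.inr ⟨i, p, b⟩) (Sum.inr ⟨x, q, d⟩)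
            ↔ (i = x ∧ (p : ℕ) = (q : ℕ) ∧ b ≠ d) := by
          rw [Tfam_adj_iff]; simp [adjB, and_assoc]
        by_cases h : (i = x ∧ (p : ℕ) = (q : ℕ) ∧ b ≠ d)
        · rw [if_pos (h1.2 h), if_pos h]
        · rw [if_neg (fun hh => h (h1.1 hh)), if_neg h]
      have hsum : ∀ x : Fin 4, (∑ q : Fin (a x),
          ((if (Tfam 4 a).Adj (Sum.inr ⟨i, p, b⟩) (Sum.inr ⟨x, q, false⟩) then 1 else 0)
            + (if (Tfam 4 a).Adj (Sum.inr ⟨i, p, b⟩) (Sum.inr ⟨x, q, true⟩) then (1:ℕ) else 0)))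
            = if i = x then 1 else 0 := by
        intro x
        have : ∀ q : Fin (a x), ((if (Tfam 4 a).Adj (Sum.inr ⟨i, p, b⟩) (Sum.inr ⟨x, q, false⟩) then 1 else 0)
            + (if (Tfam 4 a).Adj (Sum.inr ⟨i, p, b⟩) (Sum.inr ⟨x, q, true⟩) then (1:ℕ) else 0))
            = if (i = x ∧ (p : ℕ) = (q : ℕ)) then 1 else 0 := by
          intro q
          rw [hterm x q false, hterm x q true]
          rcases b <;> by_cases h1 : i = x <;> by_cases h2 : (p : ℕ) = (q : ℕ) <;>
            simp [h1, h2]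
        rw [Finset.sum_congr rfl fun q _ => this q]
        by_cases h : i = x
        · subst h
          have : ∀ q : Fin (a i), (if (i = i ∧ (p : ℕ) = (q : ℕ)) then (1:ℕ) else 0)
              = if q = p then 1 else 0 := by
            intro q
            by_cases h2 : q = p
            · subst h2; simp
            · rw [if_neg, if_neg h2]
              rintro ⟨-, hval⟩
              exact h2 (Fin.ext hval.symm)
          rw [Finset.sum_congr rfl fun q _ => this q, if_pos rfl, Finset.sum_ite_eq' univ p fun _ => 1]
          simp
        · rw [if_neg h, Finset.sum_eq_zero]
          intro q _
          rw [if_neg (fun hh => h hh.1)]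
      rw [Finset.sum_congr rfl fun x _ => hsum x, Finset.sum_ite_eq univ i fun _ => 1]
      simp
    rw [hA, hB, dnat]
    rcases b <;> simp

lemma sFull_true (a : ℕ → ℕ) (u : Vt a) :
    sSt (a := a) (fun _ => true) (fun i => a i) u = true := by
  rcases u with i | ⟨i, q, b⟩
  · rfl
  · simp [sSt, q.isLt]

lemma dnat_cast (a : ℕ → ℕ) (u : Vt a) : ((dnat a u : ℕ) : ℚ) = diagv a u := by
  rcases u with i | ⟨i, q, b⟩
  · by_cases h : i = 0 ∨ i = 3 <;> simp [dnat, diagv, Dg, h]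
  · rcases b <;> simp [dnat, diagv]

lemma lap_eq_s12 (a : ℕ → ℕ) :
    (Tfam 4 a).lapMatrix ℚ = NN a (sSt (fun _ => true) (fun i => a i)) := by
  ext u v
  rw [SimpleGraph.lapMatrix, Matrix.sub_apply]
  by_cases huv : u = v
  · subst huv
    rw [SimpleGraph.degMatrix]
    simp only [Matrix.diagonal_apply_eq, SimpleGraph.adjMatrix_apply,
      (Tfam 4 a).irrefl, if_false, sub_zero]
    rw [NN, if_pos rfl, if_pos (sFull_true a u), degree_eq_s12, dnat_cast]
  · rw [SimpleGraph.degMatrix]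
    simp only [Matrix.diagonal_apply_ne _ huv, SimpleGraph.adjMatrix_apply, zero_sub]
    rw [NN, if_neg huv, sFull_true a u, sFull_true a v]
    simp only [Bool.true_and]
    by_cases hadj : (Tfam 4 a).Adj u v
    · rw [if_pos hadj, if_pos ((Tfam_adj_iff a u v).1 hadj)]
    · rw [if_neg hadj, if_neg (fun h => hadj ((Tfam_adj_iff a u v).2 h))]
      simp

lemma prod_deg (a : ℕ → ℕ) :
    ∏ v : Vt a, ((Tfam 4 a).degree v : ℚ)
      = (∏ i : Fin 4, Dg a i) * 2 ^ (∑ i : Fin 4, a i) := by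
  have h1 : ∀ v : Vt a, ((Tfam 4 a).degree v : ℚ) = ((dnat a v : ℕ) : ℚ) := by
    intro v; rw [degree_eq_s12]
  rw [Finset.prod_congr rfl fun v _ => h1 v]
  rw [Fintype.prod_sum_type]
  have h2 : ∏ i : Fin 4, ((dnat a (Sum.inl i) : ℕ) : ℚ) = ∏ i : Fin 4, Dg a i := by
    refine Finset.prod_congr rfl fun i _ => ?_
    rw [dnat_cast]; rfl
  have h3 : (∏ x : (Σ i : Fin 4, Fin (a i) × Bool), ((dnat a (Sum.inr x) : ℕ) : ℚ))
      = 2 ^ (∑ i : Fin 4, a i) := by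
    rw [← Finset.univ_sigma_univ, Finset.prod_sigma]
    have h4 : ∀ j : Fin 4, (∏ y : Fin (a j) × Bool, ((dnat a (Sum.inr ⟨j, y⟩) : ℕ) : ℚ))
        = 2 ^ (a j) := by
      intro j
      rw [Fintype.prod_prod_type]
      have : ∀ q : Fin (a j), (∏ b : Bool, ((dnat a (Sum.inr ⟨j, q, b⟩) : ℕ) : ℚ)) = 2 := by
        intro q
        rw [Fintype.prod_bool]
        simp [dnat]
      rw [Finset.prod_congr rfl fun q _ => this q]
      simp
    rw [Finset.prod_congr rfl fun j _ => h4 j, Finset.prod_pow_eq_pow_sum]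
  rw [h2, h3]

/-- For `t ≥ 4`, `π(T(t,t,t+1,t)) =
(3/2)^{4t+1} · 2(128t⁴+704t³+1536t²+1512t+567)/(81(t+1)²(t+2)(t+3))`. -/
theorem lapRatio_C (t : ℕ) (ht : 4 ≤ t) :
    lapRatio (Tfam 4 (fun i => if i = 2 then t + 1 else t)) =
      (3 / 2 : ℚ) ^ (4 * t + 1) *
        (2 * (128 * (t : ℚ) ^ 4 + 704 * (t : ℚ) ^ 3 + 1536 * (t : ℚ) ^ 2
            + 1512 * (t : ℚ) + 567)) /
        (81 * ((t : ℚ) + 1) ^ 2 * ((t : ℚ) + 2) * ((t : ℚ) + 3)) := by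
  set a : ℕ → ℕ := fun i => if i = 2 then t + 1 else t with hadef
  have hcard : ((univ : Finset (Fin 4)).filter
      (fun j => (fun _ : Fin 4 => true) j = true)).card = 4 := by decide
  have hper := main_formula a ((∑ i : Fin 4, a i) + 4) (fun _ => true) (fun i => a i)
      (fun i => le_refl _) (by rw [hcard])
  rw [lapRatio, lap_eq_s12 a, hper, prod_deg a]
  have hsum : (∑ i : Fin 4, a (i : ℕ)) = 4 * t + 1 := by
    rw [Fin.sum_univ_four]
    show (if (0:ℕ) = 2 then t+1 else t) + (if (1:ℕ) = 2 then t+1 else t)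
      + (if (2:ℕ) = 2 then t+1 else t) + (if (3:ℕ) = 2 then t+1 else t) = 4*t+1
    norm_num
    omega
  have ha0 : (a 0 : ℚ) = t := by norm_num [hadef]
  have ha1 : (a 1 : ℚ) = t := by norm_num [hadef]
  have ha2 : (a 2 : ℚ) = t + 1 := by norm_num [hadef]
  have ha3 : (a 3 : ℚ) = t := by norm_num [hadef]
  have hD0 : Dg a 0 = (t : ℚ) + 1 := by
    rw [Dg, if_pos (Or.inl rfl)]
    rw [show (((0:Fin 4)):ℕ) = 0 from rfl, ha0]
  have hD1 : Dg a 1 = (t : ℚ) + 2 := by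
    rw [Dg, if_neg (by decide)]
    rw [show (((1:Fin 4)):ℕ) = 1 from rfl, ha1]
  have hD2 : Dg a 2 = (t : ℚ) + 3 := by
    rw [Dg, if_neg (by decide)]
    rw [show (((2:Fin 4)):ℕ) = 2 from rfl, ha2]
    ring
  have hD3 : Dg a 3 = (t : ℚ) + 1 := by
    rw [Dg, if_pos (Or.inr rfl)]
    rw [show (((3:Fin 4)):ℕ) = 3 from rfl, ha3]
  have hprodD : (∏ i : Fin 4, Dg a i) = ((t:ℚ)+1) * ((t:ℚ)+2) * ((t:ℚ)+3) * ((t:ℚ)+1) := by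
    rw [Fin.prod_univ_four, hD0, hD1, hD2, hD3]
  have hQ : Qf (fun _ => true) (fun i => Dg a i + ((a (i : ℕ) : ℕ) : ℚ) / 3)
      = (((t:ℚ)+1) + (t:ℚ)/3) * (((t:ℚ)+2) + (t:ℚ)/3) * (((t:ℚ)+3) + ((t:ℚ)+1)/3)
          * (((t:ℚ)+1) + (t:ℚ)/3)
        + (((t:ℚ)+3) + ((t:ℚ)+1)/3) * (((t:ℚ)+1) + (t:ℚ)/3)
        + (((t:ℚ)+1) + (t:ℚ)/3) * (((t:ℚ)+1) + (t:ℚ)/3)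
        + (((t:ℚ)+1) + (t:ℚ)/3) * (((t:ℚ)+2) + (t:ℚ)/3)
        + 1 := by
    rw [Qf]
    simp only [if_true, Bool.and_self, Bool.and_true]
    rw [hD0, hD1, hD2, hD3, show (((0:Fin 4)):ℕ) = 0 from rfl,
      show (((1:Fin 4)):ℕ) = 1 from rfl, show (((2:Fin 4)):ℕ) = 2 from rfl,
      show (((3:Fin 4)):ℕ) = 3 from rfl, ha0, ha1, ha2, ha3]
    ring
  rw [hsum, hQ, hprodD]
  have h2 : ((2:ℚ)) ^ (4*t+1) ≠ 0 := by positivity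
  have h3 : ((t:ℚ)+1) ≠ 0 := by positivity
  have h4 : ((t:ℚ)+2) ≠ 0 := by positivity
  have h5 : ((t:ℚ)+3) ≠ 0 := by positivity
  rw [div_pow]
  field_simp
  ring
end
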